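/- arXiv:2108.13406 — 7 statements merged into one kernel-verified Lean document; each statement's English description precedes it below -/
import Mathlib

section
/- With ℓ, t, γ, j, k, r, n and S = S⁺ ∪ S⁻ ⊆ ℤ_n chosen as in the construction, the set S is symmetric, (ℓS) ∩ S = ∅, and (ℓS) ∪ S = ℤ_n; that is, S is a symmetric complete (ℓ,1)-sum-free set in ℤ_n. -/
/-- The `m`-fold sumset of `S`: all sums of `m` (not necessarily distinct) elements of `S`. -/
def sumset {Γ : Type*} [AddCommMonoid Γ] (m : ℕ) (S : Set Γ) : Set Γ :=
  {x | ∃ f : Fin m → Γ, (∀ i, f i ∈ S) ∧ ∑ i, f i = x}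

/-- The set `S⁺ = I₁ ∪ I₂ ∪ I₃ ⊆ ℤ_n` from the construction, where `j = 2γ + 1`:
`I₁ = {2θ+1 : 0 ≤ θ ≤ k+γ-2t-4}`, `I₂ = {2k+j-2(2t+4)+2θ : 2 ≤ θ ≤ t+2}`, `I₃ = {2k+j}`. -/
def Splus (n t k : ℕ) (γ : ℤ) : Set (ZMod n) :=
  {x | ∃ θ : ℤ, 0 ≤ θ ∧ θ ≤ (k : ℤ) + γ - 2 * t - 4 ∧ x = ((2 * θ + 1 : ℤ) : ZMod n)} ∪
  {x | ∃ θ : ℤ, 2 ≤ θ ∧ θ ≤ (t : ℤ) + 2 ∧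
      x = ((2 * (k : ℤ) + (2 * γ + 1) - 2 * (2 * (t : ℤ) + 4) + 2 * θ : ℤ) : ZMod n)} ∪
  {((2 * (k : ℤ) + (2 * γ + 1) : ℤ) : ZMod n)}

/-- The set `S⁻ = {n - s : s ∈ S⁺} ⊆ ℤ_n` from the construction. -/
def Sminus (n t k : ℕ) (γ : ℤ) : Set (ZMod n) := (fun s => -s) '' Splus n t k γ


/-!
Write `M = 2k + j` for the largest element of `S⁺`; then `n = (ℓ + 1) M - (4t + 6)`, and `S` lifts
to the set of odd integers `p` with `|p| ≤ M` whose defect `M - |p|` is admissible: `0`, an even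
number in `[2t + 4, 4t + 4]`, or an even number `≥ 4t + 8`.

A sum `σ` of `ℓ` elements is even with `|σ| ≤ ℓ M`, so it can agree modulo `n` with an (odd) element
`s` only if `σ - s = ± n`, say `+ n`. Then `s < 0`, and the numbers `M - gᵢ ≥ 0` for the summands
`gᵢ`, together with the defect of `-s`, add up to exactly `4t + 6`. Each is `0` or at least
`2t + 4`, so this would make `4t + 6` the sum of two admissible defects, which it is not.

Conversely, let `w ∈ [0, n)` be even (odd residues follow by symmetry). Either `w` is a sum of `ℓ`
odd numbers of absolute value at most `M - (4t + 8)`, all of which lie in `S`; or `w - n ∈ S`; or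
else `ℓ M - w` is an admissible defect, which splits into `ℓ` admissible defects below `M`, and
`w` is the sum of the corresponding `ℓ` elements of `S⁺`.
-/

theorem sumset_image {G H : Type*} [AddCommMonoid G] [AddCommMonoid H] (φ : G →+ H) (m : ℕ)
    (S : Set G) : sumset m (φ '' S) = φ '' sumset m S := by
  ext x
  constructor
  · rintro ⟨f, hf, rfl⟩
    choose g hgS hg using hf
    exact ⟨∑ i, g i, ⟨g, hgS, rfl⟩, by simp only [map_sum, hg]⟩
  · rintro ⟨_, ⟨g, hgS, rfl⟩, rfl⟩
    exact ⟨fun i => φ (g i), fun i => ⟨g i, hgS i, rfl⟩, (map_sum φ g _).symm⟩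

theorem neg_mem_sumset {G : Type*} [AddCommGroup G] {S : Set G} (hS : ∀ s ∈ S, -s ∈ S)
    {m : ℕ} {x : G} (hx : x ∈ sumset m S) : -x ∈ sumset m S := by
  obtain ⟨f, hf, rfl⟩ := hx
  exact ⟨fun i => -f i, fun i => hS _ (hf i), Finset.sum_neg_distrib _⟩

theorem sum_mem_of_lt_two_mul {ι : Type*} {T : Set ℤ} {a : ℤ} (ha : 0 ≤ a) (hT0 : 0 ∈ T)
    (hT : ∀ x ∈ T, x = 0 ∨ a ≤ x) {f : ι → ℤ} (s : Finset ι) (hf : ∀ i ∈ s, f i ∈ T)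
    (hs : ∑ i ∈ s, f i < 2 * a) : ∑ i ∈ s, f i ∈ T := by
  classical
  induction s using Finset.induction_on with
  | empty => simpa using hT0
  | insert i s hi ih =>
    rw [Finset.sum_insert hi] at hs ⊢
    have hnonneg : ∀ x ∈ T, 0 ≤ x := fun x hx => (hT x hx).elim (·.ge) ha.trans
    have hfi := hf i (Finset.mem_insert_self i s)
    have hrest : ∑ j ∈ s, f j ∈ T :=
      ih (fun j hj => hf j (Finset.mem_insert_of_mem hj)) (by linarith [hnonneg _ hfi])
    rcases hT _ hfi with h | h
    · rwa [h, zero_add]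
    rcases hT _ hrest with h' | h'
    · rwa [h', add_zero]
    · linarith

theorem sum_emod_two_of_odd {L : ℕ} {g : Fin L → ℤ} (hg : ∀ i, g i % 2 = 1) :
    (∑ i, g i) % 2 = L % 2 := by
  rw [Finset.sum_int_mod, Finset.sum_congr rfl fun i _ => hg i]
  simp

theorem exists_odd_sum_eq {m : ℤ} (hm : m % 2 = 1) (hm0 : 0 ≤ m) :
    ∀ (L : ℕ) (z : ℤ), z % 2 = L % 2 → -(L * m) ≤ z → z ≤ L * m →
      ∃ f : Fin L → ℤ, (∀ i, f i % 2 = 1 ∧ -m ≤ f i ∧ f i ≤ m) ∧ ∑ i, f i = z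
  | 0, z, _, hlo, hhi => ⟨Fin.elim0, Fin.rec0, by simp at hlo hhi ⊢; omega⟩
  | L + 1, z, hpar, hlo, hhi => by
    push_cast at hpar hlo hhi
    have hLm : 0 ≤ (L : ℤ) * m := by positivity
    obtain ⟨a, ha, hrest⟩ : ∃ a : ℤ, (a % 2 = 1 ∧ -m ≤ a ∧ a ≤ m) ∧
        (z - a) % 2 = L % 2 ∧ -(L * m) ≤ z - a ∧ z - a ≤ L * m := by
      rcases le_or_gt m z with h | h
      · exact ⟨m, ⟨hm, by omega, le_rfl⟩, by omega, by linarith, by linarith⟩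
      rcases le_or_gt z (-m) with h' | h'
      · exact ⟨-m, ⟨by omega, le_rfl, by omega⟩, by omega, by linarith, by linarith⟩
      rcases Int.emod_two_eq z with hz | hz
      · have hL : m ≤ L * m := le_mul_of_one_le_left hm0 (by omega)
        exact ⟨z + 1, ⟨by omega, by omega, by omega⟩, by omega, by omega, by omega⟩
      · exact ⟨z, ⟨hz, by omega, by omega⟩, by omega, by omega, by omega⟩
    obtain ⟨f, hf, hsum⟩ := exists_odd_sum_eq hm hm0 L (z - a) hrest.1 hrest.2.1 hrest.2.2
    exact ⟨Fin.cons a f, Fin.forall_fin_succ.mpr ⟨by simpa using ha, by simpa using hf⟩,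
      by rw [Fin.sum_cons, hsum]; ring⟩

theorem exists_even_sum_eq {a b : ℤ} (ha : 1 ≤ a) (hab : a ≤ b) (hgap : 2 * a ≤ b + 2)
    (ha2 : a % 2 = 0) (hb : b % 2 = 0) :
    ∀ (L : ℕ) (d : ℤ), d % 2 = 0 → (d = 0 ∨ a ≤ d) → d ≤ L * b →
      ∃ f : Fin L → ℤ, (∀ i, f i % 2 = 0 ∧ (f i = 0 ∨ a ≤ f i ∧ f i ≤ b)) ∧ ∑ i, f i = d
  | 0, d, _, hd, hdb => ⟨Fin.elim0, Fin.rec0, by simp at hdb ⊢; omega⟩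
  | L + 1, d, hd2, hd, hdb => by
    push_cast at hdb
    have hLb : 0 ≤ (L : ℤ) * b := mul_nonneg (by positivity) (by omega)
    obtain ⟨x, hx, hrest⟩ : ∃ x : ℤ, (x % 2 = 0 ∧ (x = 0 ∨ a ≤ x ∧ x ≤ b)) ∧
        (d - x) % 2 = 0 ∧ (d - x = 0 ∨ a ≤ d - x) ∧ d - x ≤ L * b := by
      rcases le_or_gt d b with h | h
      · exact ⟨d, ⟨hd2, by omega⟩, by omega, by omega, by omega⟩
      have hL : b ≤ L * b := le_mul_of_one_le_left (by omega) (by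
        by_contra! hL
        have : (L : ℤ) = 0 := by omega
        simp only [this] at hdb
        omega)
      rcases le_or_gt a (d - b) with h' | h'
      · exact ⟨b, ⟨hb, by omega⟩, by omega, by omega, by linarith⟩
      · exact ⟨d - a, ⟨by omega, by omega⟩, by omega, by omega, by omega⟩
    obtain ⟨f, hf, hsum⟩ := exists_even_sum_eq ha hab hgap ha2 hb L (d - x) hrest.1 hrest.2.1
      hrest.2.2
    exact ⟨Fin.cons x f, Fin.forall_fin_succ.mpr ⟨by simpa using hx, by simpa using hf⟩,
      by rw [Fin.sum_cons, hsum]; ring⟩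

/-- The defects `M - p` of the elements `p` of `S⁺`, where `M = 2k + j`: `0` on `I₃`,
`[2t + 4, 4t + 4]` on `I₂` and `[4t + 8, ∞)` on `I₁`. -/
def admissibleDefects (t : ℕ) : Set ℤ :=
  {d | d % 2 = 0 ∧ (d = 0 ∨ (2 * t + 4 ≤ d ∧ d ≤ 4 * t + 4) ∨ 4 * t + 8 ≤ d)}

def liftSplus (t : ℕ) (M : ℤ) : Set ℤ := {p | 1 ≤ p ∧ M - p ∈ admissibleDefects t}

def liftS (t : ℕ) (M : ℤ) : Set ℤ := {p | p ∈ liftSplus t M ∨ -p ∈ liftSplus t M}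

section
variable {t : ℕ} {M : ℤ}

theorem zero_mem_admissibleDefects : (0 : ℤ) ∈ admissibleDefects t := ⟨rfl, Or.inl rfl⟩

theorem add_ne_of_mem_admissibleDefects {d₁ d₂ : ℤ} (h₁ : d₁ ∈ admissibleDefects t)
    (h₂ : d₂ ∈ admissibleDefects t) : d₁ + d₂ ≠ 4 * t + 6 := by
  obtain ⟨-, h₁⟩ := h₁
  obtain ⟨-, h₂⟩ := h₂
  omega

theorem exists_admissibleDefects_sum_eq (hM : 8 * t + 15 ≤ M) (hMo : M % 2 = 1) {L : ℕ}
    (hL : 1 ≤ L) {d : ℤ} (hd : d ∈ admissibleDefects t) (hdL : d ≤ L * (M - 1)) :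
    ∃ f : Fin L → ℤ, (∀ i, f i ∈ admissibleDefects t ∧ f i ≤ M - 1) ∧ ∑ i, f i = d := by
  rcases le_or_gt d (4 * t + 4) with h | h
  · obtain ⟨L, rfl⟩ := Nat.exists_eq_add_of_le' hL
    refine ⟨Fin.cons d 0, Fin.forall_fin_succ.mpr ⟨?_, fun i => ?_⟩, by simp⟩
    · simpa using ⟨hd, by omega⟩
    · simpa using ⟨zero_mem_admissibleDefects, by omega⟩
  · obtain ⟨f, hf, hsum⟩ := exists_even_sum_eq (a := 4 * t + 8) (b := M - 1) (by omega)
      (by omega) (by omega) (by omega) (by omega) L d hd.1 (by obtain ⟨-, hd⟩ := hd; omega) hdL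
    refine ⟨f, fun i => ?_, hsum⟩
    obtain ⟨hf2, hf⟩ := hf i
    exact ⟨⟨hf2, by omega⟩, by omega⟩

theorem neg_mem_liftS {p : ℤ} (hp : p ∈ liftS t M) : -p ∈ liftS t M := by
  simpa [liftS, or_comm] using hp

theorem liftS_bounds (hMo : M % 2 = 1) {p : ℤ} (hp : p ∈ liftS t M) :
    p % 2 = 1 ∧ -M ≤ p ∧ p ≤ M := by
  rcases hp with ⟨h₁, h₂, h₃⟩ | ⟨h₁, h₂, h₃⟩ <;> omega

theorem sub_mem_admissibleDefects_or_lt {p : ℤ} (hp : p ∈ liftS t M) :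
    M - p ∈ admissibleDefects t ∨ M < M - p := by
  rcases hp with ⟨-, h⟩ | ⟨h, -⟩
  · exact Or.inl h
  · right; omega

theorem mem_liftS_of_odd (hMo : M % 2 = 1) {p : ℤ} (hp : p % 2 = 1)
    (hlo : -(M - (4 * t + 8)) ≤ p) (hhi : p ≤ M - (4 * t + 8)) : p ∈ liftS t M := by
  rcases le_or_gt 1 p with h | h
  · exact Or.inl ⟨h, by omega, by omega⟩
  · exact Or.inr ⟨by omega, by omega, by omega⟩

theorem sum_sub_ne_of_mem_liftS (hM : 4 * t + 7 ≤ M) {L : ℕ} {g : Fin L → ℤ}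
    (hg : ∀ i, g i ∈ liftS t M) {s : ℤ} (hs : s ∈ liftS t M) :
    ∑ i, g i - s ≠ L * M + M - (4 * t + 6) := by
  intro h
  set T : Set ℤ := {e | e ∈ admissibleDefects t ∨ M < e}
  have hdef : ∀ i, M - g i ∈ T := fun i => sub_mem_admissibleDefects_or_lt (hg i)
  have hT : ∀ e ∈ T, e = 0 ∨ 2 * (t : ℤ) + 4 ≤ e := by
    rintro e (⟨-, he⟩ | he) <;> omega
  have hsum : ∑ i, (M - g i) = L * M - ∑ i, g i := by simp [Finset.sum_sub_distrib]
  have hnonneg : 0 ≤ ∑ i, (M - g i) :=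
    Finset.sum_nonneg fun i _ => by rcases hT _ (hdef i) with he | he <;> omega
  have hs' : M - -s ∈ admissibleDefects t := by
    rcases hs with ⟨hs, -⟩ | ⟨-, hs⟩
    · exfalso
      linarith
    · exact hs
  have hs0 : 0 ≤ M - -s := by obtain ⟨-, h⟩ := hs'; omega
  rcases sum_mem_of_lt_two_mul (by omega) (Or.inl zero_mem_admissibleDefects) hT Finset.univ
      (fun i _ => hdef i) (by linarith) with hmem | hmem
  · exact add_ne_of_mem_admissibleDefects hmem hs' (by linarith)
  · linarith

theorem not_dvd_sub_of_mem_sumset {L : ℕ} (hL : Even L) (hL1 : 1 ≤ L) (hMo : M % 2 = 1)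
    (hM : 4 * t + 7 ≤ M) {σ s : ℤ} (hσ : σ ∈ sumset L (liftS t M)) (hs : s ∈ liftS t M) :
    ¬ (L * M + M - (4 * t + 6)) ∣ σ - s := by
  obtain ⟨g, hg, rfl⟩ := hσ
  rintro ⟨c, hc⟩
  have hL2 : (2 : ℤ) ≤ L := by obtain ⟨r, hr⟩ := hL; omega
  have hLM : 2 * M ≤ L * M := mul_le_mul_of_nonneg_right hL2 (by omega)
  have hup : ∑ i, g i ≤ L * M := by
    simpa using Finset.sum_le_card_nsmul Finset.univ g M
      fun i _ => (liftS_bounds hMo (hg i)).2.2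
  have hlo : -(L * M) ≤ ∑ i, g i := by
    simpa using Finset.card_nsmul_le_sum Finset.univ g (-M)
      fun i _ => (liftS_bounds hMo (hg i)).2.1
  obtain ⟨hs2, hs1, hs3⟩ := liftS_bounds hMo hs
  have hc1 : c < 2 := by by_contra! h; nlinarith
  have hc2 : -2 < c := by by_contra! h; nlinarith
  obtain rfl | rfl | rfl : c = -1 ∨ c = 0 ∨ c = 1 := by omega
  · refine sum_sub_ne_of_mem_liftS hM (g := fun i => -g i) (fun i => neg_mem_liftS (hg i))
      (neg_mem_liftS hs) ?_
    rw [Finset.sum_neg_distrib]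
    linarith
  · have hpar := sum_emod_two_of_odd fun i => (liftS_bounds hMo (hg i)).1
    obtain ⟨r, hr⟩ := hL
    omega
  · exact sum_sub_ne_of_mem_liftS hM hg hs (by linarith)

theorem mem_sumset_of_abs_le (hMo : M % 2 = 1) (hM : 4 * t + 8 ≤ M) {L : ℕ} {z : ℤ}
    (hz : z % 2 = L % 2) (hlo : -(L * (M - (4 * t + 8))) ≤ z) (hhi : z ≤ L * (M - (4 * t + 8))) :
    z ∈ sumset L (liftS t M) := by
  obtain ⟨f, hf, hsum⟩ := exists_odd_sum_eq (by omega) (by omega) L z hz hlo hhi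
  exact ⟨f, fun i => mem_liftS_of_odd hMo (hf i).1 (hf i).2.1 (hf i).2.2, hsum⟩

theorem mul_sub_mem_sumset_of_mem_admissibleDefects (hMo : M % 2 = 1) (hM : 8 * t + 15 ≤ M)
    {L : ℕ} (hL : 1 ≤ L) {d : ℤ} (hd : d ∈ admissibleDefects t) (hdL : d ≤ L * (M - 1)) :
    L * M - d ∈ sumset L (liftS t M) := by
  obtain ⟨f, hf, hsum⟩ := exists_admissibleDefects_sum_eq hM hMo hL hd hdL
  refine ⟨fun i => M - f i, fun i => Or.inl ⟨by linarith [(hf i).2], by simpa using (hf i).1⟩, ?_⟩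
  simp [Finset.sum_sub_distrib, hsum]

theorem mem_sumset_or_sub_mem {L : ℕ} (hL : Even L) (hL1 : 1 ≤ L) (hMo : M % 2 = 1)
    (hM : 8 * t + 15 ≤ M) {w : ℤ} (hw2 : w % 2 = 0) (hw0 : 0 ≤ w)
    (hwn : w < L * M + M - (4 * t + 6)) :
    w ∈ sumset L (liftS t M) ∨ w - (L * M + M - (4 * t + 6)) ∈ liftS t M := by
  have hL2 : (L : ℤ) % 2 = 0 := by obtain ⟨r, hr⟩ := hL; omega
  have hLM2 : (L * M) % 2 = 0 := by rw [Int.mul_emod, hL2, zero_mul, Int.zero_emod]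
  have hmul : (L : ℤ) * (4 * t + 8) ≤ L * (M - 1) :=
    mul_le_mul_of_nonneg_left (by omega) (by positivity)
  have hexp : (L : ℤ) * (M - (4 * t + 8)) = L * M - L * (4 * t + 8) := by ring
  by_cases hsmall : w ≤ L * (M - (4 * t + 8))
  · have : 0 ≤ (L : ℤ) * (M - (4 * t + 8)) := mul_nonneg (by positivity) (by omega)
    exact Or.inl (mem_sumset_of_abs_le hMo (by omega) (by omega) (by omega) hsmall)
  by_cases hq : -(w - (L * M + M - (4 * t + 6))) ∈ liftSplus t M
  · exact Or.inr (Or.inr hq)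
  -- `L M - w = (4t + 6) - (M - q)` for `q = n - w`, and `M - q` is not admissible
  have hd : L * M - w ∈ admissibleDefects t := by
    simp only [liftSplus, admissibleDefects, Set.mem_ofPred_eq] at hq ⊢
    omega
  simpa using Or.inl (mul_sub_mem_sumset_of_mem_admissibleDefects hMo hM hL1 hd (by omega))

end

theorem exists_even_eq_or_eq_neg {n : ℕ} (hn : n % 2 = 1) (x : ZMod n) :
    ∃ w : ℤ, w % 2 = 0 ∧ 0 ≤ w ∧ w < n ∧ (x = w ∨ x = -w) := by
  have : NeZero n := ⟨by omega⟩
  have hx : ((x.val : ℤ) : ZMod n) = x := by simp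
  have hlt := ZMod.val_lt x
  rcases Int.emod_two_eq (x.val : ℤ) with h | h
  · exact ⟨x.val, h, by positivity, by exact_mod_cast hlt, Or.inl hx.symm⟩
  · refine ⟨n - x.val, by omega, by omega, by omega, Or.inr ?_⟩
    simp

section
variable {t n L : ℕ} {M : ℤ}

theorem neg_mem_image_liftS {x : ZMod n} (hx : x ∈ Int.castAddHom (ZMod n) '' liftS t M) :
    -x ∈ Int.castAddHom (ZMod n) '' liftS t M := by
  obtain ⟨p, hp, rfl⟩ := hx
  exact ⟨-p, neg_mem_liftS hp, map_neg _ p⟩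

theorem sumset_inter_eq_empty (hL : Even L) (hL1 : 1 ≤ L) (hMo : M % 2 = 1)
    (hM : 4 * t + 7 ≤ M) (hn : (n : ℤ) = L * M + M - (4 * t + 6)) :
    sumset L (Int.castAddHom (ZMod n) '' liftS t M) ∩ Int.castAddHom (ZMod n) '' liftS t M
      = ∅ := by
  rw [sumset_image, Set.eq_empty_iff_forall_notMem]
  rintro _ ⟨⟨σ, hσ, rfl⟩, s, hs, hσs⟩
  refine not_dvd_sub_of_mem_sumset hL hL1 hMo hM hσ hs ?_
  rw [← hn, ← ZMod.intCast_eq_intCast_iff_dvd_sub]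
  simpa using hσs

theorem sumset_union_eq_univ (hL : Even L) (hL1 : 1 ≤ L) (hMo : M % 2 = 1)
    (hM : 8 * t + 15 ≤ M) (hn : (n : ℤ) = L * M + M - (4 * t + 6)) :
    sumset L (Int.castAddHom (ZMod n) '' liftS t M) ∪ Int.castAddHom (ZMod n) '' liftS t M
      = Set.univ := by
  have hn2 : n % 2 = 1 := by
    obtain ⟨r, hr⟩ := hL
    have : (L : ℤ) * M = 2 * (r * M) := by rw [hr]; push_cast; ring
    omega
  refine Set.eq_univ_of_forall fun x => ?_
  obtain ⟨w, hw2, hw0, hwn, hx⟩ := exists_even_eq_or_eq_neg hn2 x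
  have hw : (w : ZMod n) ∈
      sumset L (Int.castAddHom (ZMod n) '' liftS t M) ∪ Int.castAddHom (ZMod n) '' liftS t M := by
    rcases mem_sumset_or_sub_mem hL hL1 hMo hM hw2 hw0 (hn ▸ hwn) with h | h
    · exact Or.inl (sumset_image (Int.castAddHom (ZMod n)) L _ ▸ ⟨w, h, rfl⟩)
    · exact Or.inr ⟨_, h, by simp [← hn]⟩
  rcases hx with rfl | rfl
  · exact hw
  · rcases hw with h | h
    · exact Or.inl (neg_mem_sumset (fun _ => neg_mem_image_liftS) h)
    · exact Or.inr (neg_mem_image_liftS h)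

end

theorem Splus_eq_image {n t k : ℕ} {γ : ℤ} (h : 2 * (t : ℤ) + 2 ≤ k + γ) :
    Splus n t k γ = Int.castAddHom (ZMod n) '' liftSplus t (2 * k + 2 * γ + 1) := by
  ext x
  simp only [Splus, liftSplus, admissibleDefects, Set.mem_union, Set.mem_ofPred_eq,
    Set.mem_image, Set.mem_singleton_iff, Int.coe_castAddHom]
  constructor
  · rintro ((⟨θ, h₀, h₁, rfl⟩ | ⟨θ, h₀, h₁, rfl⟩) | rfl)
    · exact ⟨2 * θ + 1, ⟨by omega, by omega, by omega⟩, rfl⟩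
    · exact ⟨2 * k + (2 * γ + 1) - 2 * (2 * t + 4) + 2 * θ, ⟨by omega, by omega, by omega⟩, rfl⟩
    · exact ⟨2 * k + (2 * γ + 1), ⟨by omega, by omega, by omega⟩, rfl⟩
  · rintro ⟨p, ⟨hp, hd2, hd | hd | hd⟩, rfl⟩
    · exact Or.inr (by congr 1; omega)
    · refine Or.inl (Or.inr ⟨(p - 2 * k - 2 * γ + 4 * t + 7) / 2, by omega, by omega, ?_⟩)
      congr 1; omega
    · exact Or.inl (Or.inl ⟨(p - 1) / 2, by omega, by omega, by congr 1; omega⟩)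

theorem Splus_union_Sminus_eq_image {n t k : ℕ} {γ : ℤ} (h : 2 * (t : ℤ) + 2 ≤ k + γ) :
    Splus n t k γ ∪ Sminus n t k γ = Int.castAddHom (ZMod n) '' liftS t (2 * k + 2 * γ + 1) := by
  rw [Sminus, Splus_eq_image h]
  ext x
  constructor
  · rintro (⟨p, hp, rfl⟩ | ⟨_, ⟨p, hp, rfl⟩, rfl⟩)
    · exact ⟨p, Or.inl hp, rfl⟩
    · exact ⟨-p, Or.inr (by simpa using hp), map_neg _ p⟩
  · rintro ⟨p, hp | hp, rfl⟩
    · exact Or.inl ⟨p, hp, rfl⟩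
    · exact Or.inr ⟨_, ⟨-p, hp, rfl⟩, by simp⟩

theorem stmt3_general (ℓ t k n : ℕ) (γ : ℤ)
    (hℓe : Even ℓ) (hℓ : 4 ≤ ℓ)
    (hk : 4 * (t : ℤ) + 2 * (ℓ : ℤ) + 2 * |γ| + 2 ≤ (k : ℤ))
    (hn : (n : ℤ) = (2 * (ℓ : ℤ) + 2) * (k : ℤ) +
      ((ℓ : ℤ) + 3 - 4 * ((t : ℤ) + 2) + γ * (2 * (ℓ : ℤ) + 2))) :
    (∀ s ∈ Splus n t k γ ∪ Sminus n t k γ, -s ∈ Splus n t k γ ∪ Sminus n t k γ) ∧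
    sumset ℓ (Splus n t k γ ∪ Sminus n t k γ) ∩ (Splus n t k γ ∪ Sminus n t k γ) = ∅ ∧
    sumset ℓ (Splus n t k γ ∪ Sminus n t k γ) ∪ (Splus n t k γ ∪ Sminus n t k γ) = Set.univ := by
  have hγ := neg_abs_le γ
  have hγ' := abs_nonneg γ
  have hnM : (n : ℤ) = ℓ * (2 * k + 2 * γ + 1) + (2 * k + 2 * γ + 1) - (4 * t + 6) := by
    rw [hn]; ring
  rw [Splus_union_Sminus_eq_image (by omega)]
  exact ⟨fun _ => neg_mem_image_liftS,
    sumset_inter_eq_empty hℓe (by omega) (by omega) (by omega) hnM,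
    sumset_union_eq_univ hℓe (by omega) (by omega) (by omega) hnM⟩

theorem stmt3 (ℓ t k n : ℕ) (γ : ℤ)
    (hℓe : Even ℓ) (hℓ : 4 ≤ ℓ) (ht : 1 ≤ t)
    (hγ1 : 1 ≤ (ℓ : ℤ) + 3 - 4 * ((t : ℤ) + 2) + γ * (2 * (ℓ : ℤ) + 2))
    (hγ2 : (ℓ : ℤ) + 3 - 4 * ((t : ℤ) + 2) + γ * (2 * (ℓ : ℤ) + 2) ≤ 2 * (ℓ : ℤ) + 2)
    (hk : 4 * (t : ℤ) + 2 * (ℓ : ℤ) + 2 * |γ| + 2 ≤ (k : ℤ))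
    (hn : (n : ℤ) = (2 * (ℓ : ℤ) + 2) * (k : ℤ) +
      ((ℓ : ℤ) + 3 - 4 * ((t : ℤ) + 2) + γ * (2 * (ℓ : ℤ) + 2))) :
    (∀ s ∈ Splus n t k γ ∪ Sminus n t k γ, -s ∈ Splus n t k γ ∪ Sminus n t k γ) ∧
    sumset ℓ (Splus n t k γ ∪ Sminus n t k γ) ∩ (Splus n t k γ ∪ Sminus n t k γ) = ∅ ∧
    sumset ℓ (Splus n t k γ ∪ Sminus n t k γ) ∪ (Splus n t k γ ∪ Sminus n t k γ) = Set.univ :=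
  stmt3_general ℓ t k n γ hℓe hℓ hk hn
end

section
/- Let ℓ ≥ 4 be even. For every integer n > 12ℓ² + 36ℓ + 24, there exists a symmetric complete (ℓ,1)-sum-free set S ⊆ ℤ_n. -/
/-!
Write `ℓ = 2L`, let `a ≤ b` be integers, `d = b - a`, `p = a + b`, and let `S` be the set of
residues of the integers `u` with `a ≤ |u| ≤ b`. A sum of `ℓ` such integers, `k` of them positive,
can take every value in `[k a - (ℓ - k) b, k b - (ℓ - k) a]`, so `ℓ S` is the set of residues of
`⋃_{|j| ≤ L} [j p - L d, j p + L d]`.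

Take `h = ⌊L / 2⌋`, `a = h σ + L d + 1`, `b = a + d` and `n = (2L - 1) σ + (4L + 2) d + 4`.
Then `2 p ≡ ±σ (mod n)`, so modulo `n` the centres `j p` are the points `i σ` (`|i| ≤ h`) and
`M + s σ` (`0 ≤ s ≤ 2 (L - h) - 1`), where `M = b + L d + 1`. As `σ ≤ 2 L d + 1`, the intervals of
radius `L d` around these two progressions fill out exactly `[-(a - 1), a - 1]` and
`[b + 1, n - b - 1]`, which together with `[a, b]` and `[n - b, n - a]` tile the period
`[1 - a, n - a]`. The bound on `n` is what makes `d ≥ 0` and `0 < σ ≤ 2 L d + 1` with this value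
of `n` exist.
-/

open Set Pointwise

lemma sumset_eq_nsmul {Γ : Type*} [AddCommMonoid Γ] (m : ℕ) (S : Set Γ) : sumset m S = m • S := by
  ext x
  simp only [sumset, mem_nsmul, List.sum_ofFn]
  constructor
  · rintro ⟨f, hf, rfl⟩
    exact ⟨fun i => ⟨f i, hf i⟩, rfl⟩
  · rintro ⟨f, rfl⟩
    exact ⟨fun i => f i, fun i => (f i).2, rfl⟩

lemma mem_nsmul_Icc_union_Icc_neg {a b : ℤ} (hab : a ≤ b) (m : ℕ) (w : ℤ) :
    w ∈ m • (Icc a b ∪ Icc (-b) (-a)) ↔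
      ∃ k : ℤ, 0 ≤ k ∧ k ≤ m ∧ w ∈ Icc (k * a - (m - k) * b) (k * b - (m - k) * a) := by
  induction m generalizing w with
  | zero =>
    simp only [zero_nsmul, Set.mem_zero, Nat.cast_zero, mem_Icc]
    constructor
    · rintro rfl; exact ⟨0, by simp⟩
    · rintro ⟨k, hk0, hk, h₁, h₂⟩
      obtain rfl : k = 0 := le_antisymm hk hk0
      linarith
  | succ m ih =>
    have hsub : ∀ k : ℤ, 0 ≤ k → k ≤ m →
        Icc (k * a - (m - k) * b) (k * b - (m - k) * a) ⊆ m • (Icc a b ∪ Icc (-b) (-a)) :=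
      fun k hk0 hkm w hw => (ih w).2 ⟨k, hk0, hkm, hw⟩
    rw [succ_nsmul, add_union, mem_union]
    constructor
    · rintro (⟨v, hv, u, ⟨hu₁, hu₂⟩, rfl⟩ | ⟨v, hv, u, ⟨hu₁, hu₂⟩, rfl⟩) <;>
        obtain ⟨k, hk0, hkm, hv₁, hv₂⟩ := (ih v).1 hv
      · exact ⟨k + 1, by omega, by push_cast; omega, by push_cast; constructor <;> linarith⟩
      · exact ⟨k, hk0, by push_cast; omega, by push_cast; constructor <;> linarith⟩
    · rintro ⟨k, hk0, hkm, hw⟩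
      push_cast at hkm hw
      rcases hk0.eq_or_lt with rfl | hk
      · right
        refine add_subset_add_right (hsub 0 le_rfl (by positivity)) ?_
        rw [Icc_add_Icc (by nlinarith) (by linarith)]
        convert hw using 2 <;> ring
      · left
        refine add_subset_add_right (hsub (k - 1) (by omega) (by omega)) ?_
        rw [Icc_add_Icc (by nlinarith) hab]
        convert hw using 2 <;> ring

lemma two_mul_nsmul_Icc_union_Icc_neg {a b : ℤ} (hab : a ≤ b) (L : ℕ) :
    (2 * L) • (Icc a b ∪ Icc (-b) (-a)) =
      (· * (a + b)) '' Icc (-L : ℤ) L + Icc (-(L * (b - a))) (L * (b - a)) := by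
  ext w
  rw [mem_nsmul_Icc_union_Icc_neg hab, mem_add]
  push_cast
  constructor
  · rintro ⟨k, hk0, hkL, hw₁, hw₂⟩
    exact ⟨_, ⟨k - L, ⟨by linarith, by linarith⟩, rfl⟩, w - (k - L) * (a + b),
      ⟨by linarith, by linarith⟩, by ring⟩
  · rintro ⟨_, ⟨j, ⟨hj₁, hj₂⟩, rfl⟩, r, ⟨hr₁, hr₂⟩, rfl⟩
    exact ⟨j + L, by linarith, by linarith, by linarith, by linarith⟩

lemma image_add_mul_Icc_add_Icc {c σ R m k : ℤ} (hσ : 0 < σ) (hσR : σ ≤ 2 * R + 1)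
    (hmk : m ≤ k) :
    (fun s => c + s * σ) '' Icc m k + Icc (-R) R = Icc (c + m * σ - R) (c + k * σ + R) := by
  ext w
  simp only [mem_add, mem_image, mem_Icc]
  constructor
  · rintro ⟨_, ⟨s, ⟨hs₁, hs₂⟩, rfl⟩, r, ⟨hr₁, hr₂⟩, rfl⟩
    constructor <;> nlinarith
  · rintro ⟨hw₁, hw₂⟩
    set t := (w - c - m * σ + R) / σ
    have ht₁ : t * σ ≤ w - c - m * σ + R := Int.ediv_mul_le _ hσ.ne'
    have ht₂ : w - c - m * σ + R < (t + 1) * σ := Int.lt_ediv_add_one_mul_self _ hσ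
    have ht₀ : 0 ≤ t := Int.ediv_nonneg (by linarith) hσ.le
    refine ⟨_, ⟨min k (m + t), ⟨le_min hmk (by linarith), min_le_left _ _⟩, rfl⟩,
      w - (c + min k (m + t) * σ), ⟨?_, ?_⟩, by ring⟩
    · rcases min_cases k (m + t) with ⟨h, hk⟩ | ⟨h, hk⟩ <;> rw [h] <;> nlinarith
    · rcases min_cases k (m + t) with ⟨h, hk⟩ | ⟨h, hk⟩ <;> rw [h] <;> nlinarith

lemma ZMod.intCast_injOn_Ico (N : ℕ) (c : ℤ) :
    InjOn (Int.cast : ℤ → ZMod N) (Ico c (c + N)) := by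
  intro x ⟨hx₁, hx₂⟩ y ⟨hy₁, hy₂⟩ hxy
  rw [ZMod.intCast_eq_intCast_iff_dvd_sub] at hxy
  have := Int.eq_zero_of_abs_lt_dvd hxy (abs_sub_lt_iff.2 ⟨by linarith, by linarith⟩)
  linarith

lemma ZMod.intCast_image_Ico (N : ℕ) [NeZero N] (c : ℤ) :
    (Int.cast : ℤ → ZMod N) '' Ico c (c + N) = univ := by
  refine eq_univ_of_forall fun z => ?_
  obtain ⟨k, rfl⟩ := ZMod.intCast_surjective z
  have hN : (0 : ℤ) < N := by exact_mod_cast NeZero.pos N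
  refine ⟨c + (k - c) % N, ⟨by linarith [Int.emod_nonneg (k - c) hN.ne'],
    by linarith [Int.emod_lt_of_pos (k - c) hN]⟩, ?_⟩
  rw [ZMod.intCast_eq_intCast_iff_dvd_sub]
  exact ⟨(k - c) / N, by rw [Int.emod_def]; ring⟩

lemma intCast_image_Icc_union_Icc_eq_compl {N : ℕ} {a b : ℤ} (ha : 0 < a) (hab : a ≤ b)
    (hbN : 2 * b < N) :
    (Int.cast : ℤ → ZMod N) '' (Icc (-(a - 1)) (a - 1) ∪ Icc (b + 1) (N - b - 1)) =
      ((Int.cast : ℤ → ZMod N) '' (Icc a b ∪ Icc (-b) (-a)))ᶜ := by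
  have : NeZero N := ⟨by rintro rfl; simp at hbN; linarith⟩
  have hshift : (Int.cast : ℤ → ZMod N) '' Icc (-b) (-a) = Int.cast '' Icc (N - b) (N - a) := by
    rw [sub_eq_add_neg, sub_eq_add_neg, ← image_const_add_Icc, image_image]
    simp
  have hgaps : Icc (-(a - 1)) (a - 1) ∪ Icc (b + 1) (N - b - 1) =
      Ico (1 - a) (1 - a + N) \ (Icc a b ∪ Icc (N - b) (N - a)) := by
    ext x; simp only [mem_union, mem_Icc, mem_sdiff, mem_Ico]; omega
  rw [hgaps, (ZMod.intCast_injOn_Ico N _).image_sdiff_subset, ZMod.intCast_image_Ico,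
    image_union, image_union, hshift, compl_eq_univ_sdiff]
  intro x; simp only [mem_union, mem_Icc, mem_Ico]; omega

lemma intCast_image_mul_Icc_eq_arcs (N : ℕ) {h L σ M : ℤ} (hhL : 2 * h ≤ L) (hLh : L ≤ 2 * h + 1)
    (hN : (N : ℤ) = 2 * M + (2 * (L - h) - 1) * σ) :
    (Int.cast : ℤ → ZMod N) '' ((· * (M + (L - h) * σ)) '' Icc (-L) L) =
      Int.cast '' ((· * σ) '' Icc (-h) h ∪ (fun s => M + s * σ) '' Icc 0 (2 * (L - h) - 1)) := by
  ext x
  simp only [mem_image, mem_union]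
  constructor
  · rintro ⟨_, ⟨j, ⟨hj₁, hj₂⟩, rfl⟩, rfl⟩
    obtain ⟨i, rfl | rfl⟩ := Int.even_or_odd' j
    · refine ⟨i * σ, Or.inl ⟨i, ⟨by omega, by omega⟩, rfl⟩, ?_⟩
      rw [ZMod.intCast_eq_intCast_iff_dvd_sub]
      exact ⟨i, by linear_combination -i * hN⟩
    · refine ⟨_, Or.inr ⟨i + (L - h), ⟨by omega, by omega⟩, rfl⟩, ?_⟩
      rw [ZMod.intCast_eq_intCast_iff_dvd_sub]
      exact ⟨i, by linear_combination -i * hN⟩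
  · rintro ⟨_, ⟨i, ⟨hi₁, hi₂⟩, rfl⟩ | ⟨s, ⟨hs₁, hs₂⟩, rfl⟩, rfl⟩
    · refine ⟨_, ⟨2 * i, ⟨by omega, by omega⟩, rfl⟩, ?_⟩
      rw [ZMod.intCast_eq_intCast_iff_dvd_sub]
      exact ⟨-i, by linear_combination i * hN⟩
    · refine ⟨_, ⟨2 * (s - (L - h)) + 1, ⟨by omega, by omega⟩, rfl⟩, ?_⟩
      rw [ZMod.intCast_eq_intCast_iff_dvd_sub]
      exact ⟨-(s - (L - h)), by linear_combination (s - (L - h)) * hN⟩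

lemma intCast_image_mul_Icc_natCast_sub (N : ℕ) (p L : ℤ) :
    (Int.cast : ℤ → ZMod N) '' ((· * (N - p)) '' Icc (-L) L) =
      Int.cast '' ((· * p) '' Icc (-L) L) := by
  ext x
  simp only [mem_image]
  constructor <;> rintro ⟨_, ⟨j, ⟨hj₁, hj₂⟩, rfl⟩, rfl⟩ <;>
    refine ⟨_, ⟨-j, ⟨by linarith, by linarith⟩, rfl⟩, ?_⟩ <;>
    rw [ZMod.intCast_eq_intCast_iff_dvd_sub] <;>
    exact ⟨j, by ring⟩

theorem two_mul_nsmul_intCast_image_Icc_union_Icc_neg_eq_compl {N L : ℕ} {a b h σ d : ℤ}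
    (hL : 0 < L) (hhL : 2 * h ≤ L) (hLh : L ≤ 2 * h + 1) (hσ : 0 < σ)
    (hσd : σ ≤ 2 * (L * d) + 1) (hd : 0 ≤ d)
    (ha : a = h * σ + L * d + 1) (hb : b = a + d)
    (hN : (N : ℤ) = (2 * L - 1) * σ + (4 * L + 2) * d + 4) :
    (2 * L) • ((Int.cast : ℤ → ZMod N) '' (Icc a b ∪ Icc (-b) (-a))) =
      ((Int.cast : ℤ → ZMod N) '' (Icc a b ∪ Icc (-b) (-a)))ᶜ := by
  set M := b + L * d + 1 with hMdef
  have hM : (N : ℤ) = 2 * M + (2 * (L - h) - 1) * σ := by rw [hN, hMdef, hb, ha]; ring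
  have hcenters : (Int.cast : ℤ → ZMod N) '' ((· * (a + b)) '' Icc (-L) L) =
      Int.cast '' ((· * σ) '' Icc (-h) h ∪ (fun s => M + s * σ) '' Icc 0 (2 * (L - h) - 1)) := by
    rw [← intCast_image_mul_Icc_eq_arcs N hhL hLh hM]
    -- `a + b = M + (L - h) σ` for even `L` and `a + b = N - (M + (L - h) σ)` for odd `L`
    rcases (show (L : ℤ) = 2 * h ∨ (L : ℤ) = 2 * h + 1 by omega) with hL | hL
    · congr 2; funext j; congr 1; rw [hMdef, hb, ha, hL]; ring
    · rw [← intCast_image_mul_Icc_natCast_sub N (M + _)]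
      congr 2; funext j; congr 1; rw [hM, hMdef, hb, ha, hL]; ring
  have heven : (· * σ) '' Icc (-h) h + Icc (-(L * d)) (L * d) = Icc (-(a - 1)) (a - 1) := by
    convert image_add_mul_Icc_add_Icc (c := 0) hσ hσd (show -h ≤ h by omega) using 2
    · simp
    · rw [ha]; ring
    · rw [ha]; ring
  have hodd : (fun s => M + s * σ) '' Icc 0 (2 * (L - h) - 1) + Icc (-(L * d)) (L * d) =
      Icc (b + 1) (N - b - 1) := by
    rw [image_add_mul_Icc_add_Icc hσ hσd (by omega)]
    congr 1
    · rw [hMdef]; ring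
    · linear_combination -hM - hMdef
  have himage_add (s t : Set ℤ) :
      (Int.cast : ℤ → ZMod N) '' (s + t) = Int.cast '' s + Int.cast '' t :=
    image_add (Int.castAddHom (ZMod N))
  have himage_nsmul : (Int.cast : ℤ → ZMod N) '' ((2 * L) • (Icc a b ∪ Icc (-b) (-a))) =
      (2 * L) • (Int.cast '' (Icc a b ∪ Icc (-b) (-a))) :=
    image_nsmul (Int.castAddHom (ZMod N)) _ _
  rw [← himage_nsmul, two_mul_nsmul_Icc_union_Icc_neg (by omega), show b - a = d by omega,
    himage_add, hcenters, ← himage_add, union_add, heven, hodd,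
    intCast_image_Icc_union_Icc_eq_compl (by nlinarith) (by omega) (by nlinarith)]

/- Since `4 L² ≡ 1 (mod 2L - 1)`, any `d ≡ L² (N - 4)` solves `(4L + 2) d ≡ N - 4 (mod 2L - 1)`;
we take the largest one with `(4L + 2) d ≤ N - 2L - 3`, which is the condition `σ ≥ 1`. -/
lemma exists_params_of_large {L N : ℤ} (hL : 1 ≤ L) (hN : 48 * L ^ 2 + 72 * L + 25 ≤ N) :
    ∃ d σ : ℤ, 0 ≤ d ∧ 0 < σ ∧ σ ≤ 2 * (L * d) + 1 ∧
      N = (2 * L - 1) * σ + (4 * L + 2) * d + 4 := by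
  obtain ⟨D, hD₁, hD₂⟩ :
      ∃ D, (4 * L + 2) * D ≤ N - 2 * L - 3 ∧ N - 2 * L - 3 < (4 * L + 2) * (D + 1) :=
    ⟨_, Int.mul_ediv_self_le (by omega),
      by linarith [Int.lt_ediv_add_one_mul_self (N - 2 * L - 3) (by omega : 0 < 4 * L + 2)]⟩
  obtain ⟨t, r, hr₀, hr₁, htr⟩ : ∃ t r, 0 ≤ r ∧ r < 2 * L - 1 ∧
      D - L ^ 2 * (N - 4) = (2 * L - 1) * t + r :=
    ⟨_, _, Int.emod_nonneg _ (by omega), Int.emod_lt_of_pos _ (by omega),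
      (Int.mul_ediv_add_emod _ _).symm⟩
  have hD : 2 * L ≤ D := by nlinarith
  obtain ⟨σ, hσ⟩ : ∃ σ, (2 * L - 1) * σ = N - 4 - (4 * L + 2) * (D - r) :=
    ⟨-(N - 4) * (2 * L ^ 2 + 2 * L + 1) - (4 * L + 2) * t,
      by linear_combination (4 * L + 2) * htr⟩
  refine ⟨D - r, σ, by omega, ?_, ?_, by linarith⟩
  · have : (4 * L + 2) * (D - r) ≤ (4 * L + 2) * D := by nlinarith
    nlinarith
  · have hX : N - 2 * L - 3 ≤ (4 * L ^ 2 + 2 * L + 2) * (D - r) := by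
      have hr : (4 * L + 2) * r ≤ (4 * L + 2) * (2 * L - 2) :=
        mul_le_mul_of_nonneg_left (by omega) (by omega)
      have hpoly : (4 * L ^ 2 - 2 * L) * (48 * L ^ 2 + 72 * L + 25) ≤ (4 * L ^ 2 - 2 * L) * N :=
        mul_le_mul_of_nonneg_left hN (by nlinarith)
      refine le_of_mul_le_mul_left ?_ (by omega : 0 < 4 * L + 2)
      calc (4 * L + 2) * (N - 2 * L - 3)
          ≤ (4 * L ^ 2 + 2 * L + 2) * (N - 2 * L - 3 - 8 * L ^ 2 + 3) := by nlinarith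
        _ ≤ (4 * L ^ 2 + 2 * L + 2) * ((4 * L + 2) * (D - r)) :=
          mul_le_mul_of_nonneg_left (by linarith) (by positivity)
        _ = (4 * L + 2) * ((4 * L ^ 2 + 2 * L + 2) * (D - r)) := by ring
    nlinarith

theorem stmt4 (ℓ n : ℕ) (hℓe : Even ℓ) (hℓ : 4 ≤ ℓ)
    (hn : 12 * ℓ ^ 2 + 36 * ℓ + 24 < n) :
    ∃ S : Set (ZMod n),
      (∀ s ∈ S, -s ∈ S) ∧ sumset ℓ S ∩ S = ∅ ∧ sumset ℓ S ∪ S = Set.univ := by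
  obtain ⟨L, rfl⟩ := hℓe
  obtain ⟨d, σ, hd, hσ, hσd, hN⟩ := exists_params_of_large (L := L) (N := n) (by omega)
    (by zify at hn; linarith)
  set a : ℤ := (L / 2 : ℕ) * σ + L * d + 1
  have hS := two_mul_nsmul_intCast_image_Icc_union_Icc_neg_eq_compl (a := a) (b := a + d)
    (by omega) (by omega) (by omega) hσ hσd hd rfl rfl hN
  rw [← two_mul]
  refine ⟨_, ?_, by rw [sumset_eq_nsmul, hS, compl_inter_self],
    by rw [sumset_eq_nsmul, hS, compl_union_self]⟩
  rintro _ ⟨u, hu, rfl⟩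
  refine ⟨-u, ?_, Int.cast_neg u⟩
  simp only [mem_union, mem_Icc] at hu ⊢
  omega
end

section
/- With ℓ, t, γ, j, k, r, n and S⁺ ⊆ ℤ_n chosen as in the construction, set M = ℓ(2k+j). Then M < n, and computing in ℤ_n (identifying elements with their least residues 0,…,n−1), the ℓ-fold sumset ℓS⁺ equals [ℓ, M]_e \ ([M−2t−2, M−2]_e ∪ {M−4t−6}). -/
lemma mem_sumset_zero {Γ : Type*} [AddCommMonoid Γ] (S : Set Γ) (x : Γ) :
    x ∈ sumset 0 S ↔ x = 0 := by
  constructor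
  · rintro ⟨f, -, rfl⟩; simp
  · rintro rfl; exact ⟨fun i => i.elim0, fun i => i.elim0, by simp⟩

lemma mem_sumset_succ {Γ : Type*} [AddCommMonoid Γ] {m : ℕ} {S : Set Γ} {x : Γ} :
    x ∈ sumset (m+1) S ↔ ∃ a ∈ S, ∃ y ∈ sumset m S, x = a + y := by
  constructor
  · rintro ⟨f, hf, rfl⟩
    exact ⟨f 0, hf 0, ∑ i : Fin m, f i.succ, ⟨fun i => f i.succ, fun i => hf _, rfl⟩,
      Fin.sum_univ_succ f⟩
  · rintro ⟨a, ha, y, ⟨g, hg, rfl⟩, rfl⟩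
    refine ⟨Fin.cons a g, fun i => ?_, by rw [Fin.sum_cons]⟩
    refine Fin.cases ha (fun j => ?_) i
    simpa using hg j

lemma mem_sumset_reflect (B : ℤ) (S : Set ℤ) (m : ℕ) (x : ℤ) :
    x ∈ sumset m ((fun d => B - d) '' S) ↔ ((m:ℤ) * B - x) ∈ sumset m S := by
  constructor
  · rintro ⟨f, hf, rfl⟩
    choose g hg hgf using hf
    refine ⟨g, hg, ?_⟩
    have h1 : ∑ i, f i = ∑ i : Fin m, (B - g i) :=
      Finset.sum_congr rfl (fun i _ => (hgf i).symm)
    rw [h1, Finset.sum_sub_distrib, Finset.sum_const, Finset.card_univ, Fintype.card_fin,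
      nsmul_eq_mul]
    ring
  · rintro ⟨g, hg, hsum⟩
    refine ⟨fun i => B - g i, fun i => ⟨g i, hg i, rfl⟩, ?_⟩
    rw [Finset.sum_sub_distrib, Finset.sum_const, Finset.card_univ, Fintype.card_fin,
      nsmul_eq_mul, hsum]
    ring

lemma sumset_image_cast (n : ℕ) (m : ℕ) (S : Set ℤ) :
    sumset m ((fun z : ℤ => (z : ZMod n)) '' S) = (fun z : ℤ => (z : ZMod n)) '' sumset m S := by
  ext x
  constructor
  · rintro ⟨f, hf, rfl⟩
    choose g hg hgf using hf
    refine ⟨∑ i, g i, ⟨g, hg, rfl⟩, ?_⟩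
    push_cast
    exact Finset.sum_congr rfl (fun i _ => hgf i)
  · rintro ⟨z, ⟨g, hg, rfl⟩, rfl⟩
    refine ⟨fun i => ((g i : ℤ) : ZMod n), fun i => ⟨g i, hg i, rfl⟩, ?_⟩
    push_cast
    rfl

/-- The set of "deficits" `B - s` for `s ∈ S⁺`, viewed in `ℤ`. -/
def Dset (t B : ℤ) : Set ℤ :=
  {d | d = 0 ∨ (Even d ∧ 2*t+4 ≤ d ∧ d ≤ B-1 ∧ d ≠ 4*t+6)}

lemma sumset_Dset (t B : ℤ) (ht : 1 ≤ t) (hB : 8*t+20 ≤ B-1) (hBe : Even (B-1)) :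
    ∀ m : ℕ, ∀ L : ℤ, L = (m:ℤ)*(B-1) →
      sumset m (Dset t B) =
      {σ : ℤ | Even σ ∧ 0 ≤ σ ∧ σ ≤ L ∧ σ ≠ 4*t+6 ∧ (σ = 0 ∨ 2*t+4 ≤ σ)} := by
  obtain ⟨b, hb⟩ := hBe
  intro m
  induction m with
  | zero =>
    intro L hL
    have hL0 : L = 0 := by simpa using hL
    subst hL0
    ext σ
    simp only [Set.mem_setOf_eq, mem_sumset_zero]
    constructor
    · rintro rfl; exact ⟨Even.zero, le_refl _, le_refl _, by omega, Or.inl rfl⟩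
    · rintro ⟨-, h1, h2, -, -⟩; omega
  | succ m ih =>
    intro L hL
    obtain ⟨L', hL'⟩ : ∃ x : ℤ, x = (m:ℤ)*(B-1) := ⟨_, rfl⟩
    have hrel : L = L' + (B-1) := by rw [hL, hL']; push_cast; ring
    have hL'0 : 0 ≤ L' := by
      rw [hL']; exact mul_nonneg (by positivity) (by omega)
    have ihm := ih L' hL'
    ext σ
    simp only [Set.mem_setOf_eq]
    rw [mem_sumset_succ, ihm]
    constructor
    · rintro ⟨d, hd, y, ⟨⟨c, hc⟩, hy0, hy1, hy2, hy3⟩, rfl⟩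
      have hde : ∃ e, d = e + e ∧ (d = 0 ∨ (2*t+4 ≤ d ∧ d ≤ B-1 ∧ d ≠ 4*t+6)) := by
        rcases hd with rfl | ⟨⟨e, he⟩, h1, h2, h3⟩
        · exact ⟨0, by ring, Or.inl rfl⟩
        · exact ⟨e, he, Or.inr ⟨h1, h2, h3⟩⟩
      obtain ⟨e, he, hd'⟩ := hde
      exact ⟨⟨e + c, by omega⟩, by omega, by omega, by omega, by omega⟩
    · rintro ⟨⟨s, hs⟩, h0, h1, h2, h3⟩
      by_cases hσL : σ ≤ L'
      · refine ⟨0, Or.inl rfl, σ, ⟨⟨s, hs⟩, h0, hσL, h2, h3⟩, by ring⟩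
      · rcases m with _ | _ | m
        · have hL'' : L' = 0 := by simpa using hL'
          refine ⟨σ, Or.inr ⟨⟨s, hs⟩, by omega, by omega, h2⟩,
            0, ⟨Even.zero, le_refl _, by omega, by omega, Or.inl rfl⟩, by ring⟩
        · have hL'' : L' = B-1 := by simpa using hL'
          by_cases h4 : 2*t+4 ≤ σ - (B-1) ∧ σ - (B-1) ≠ 4*t+6
          · refine ⟨B-1, Or.inr ⟨⟨b, by omega⟩, by omega, by omega, by omega⟩,
              σ - (B-1), ⟨⟨s - b, by omega⟩, by omega, by omega, by omega, by omega⟩, by ring⟩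
          · by_cases h5 : σ - (B-1) = 2*t+2
            · refine ⟨B-2*t-7, Or.inr ⟨⟨b - (t+3), by omega⟩, by omega, by omega, by omega⟩,
                4*t+8, ⟨⟨2*t+4, by ring⟩, by omega, by omega, by omega, by omega⟩, by omega⟩
            · refine ⟨B-2*t-5, Or.inr ⟨⟨b - (t+2), by omega⟩, by omega, by omega, by omega⟩,
                σ - (B-1) + (2*t+4),
                ⟨⟨s - b + (t+2), by omega⟩, by omega, by omega, by omega, by omega⟩, by omega⟩
        · have hge : 2*(B-1) ≤ L' := by
            have e1 : L' = (m:ℤ)*(B-1) + 2*(B-1) := by rw [hL']; push_cast; ring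
            have e2 : 0 ≤ (m:ℤ)*(B-1) := mul_nonneg (by positivity) (by omega)
            omega
          refine ⟨B-1, Or.inr ⟨⟨b, by omega⟩, by omega, by omega, by omega⟩,
            σ - (B-1), ⟨⟨s - b, by omega⟩, by omega, by omega, by omega, by omega⟩, by ring⟩

lemma Splus_eq_image_s6 (n t k : ℕ) (γ : ℤ) (ht : (1:ℤ) ≤ (t:ℤ))
    (B : ℤ) (hBdef : B = 2*(k:ℤ) + 2*γ + 1) (hB : 8*(t:ℤ)+20 ≤ B - 1) :
    Splus n t k γ = (fun z : ℤ => (z : ZMod n)) '' ((fun d => B - d) '' Dset t B) := by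
  ext x
  simp only [Splus, Set.mem_union, Set.mem_setOf_eq, Set.mem_singleton_iff, Set.mem_image,
    Dset, exists_exists_and_eq_and]
  constructor
  · rintro ((⟨θ, h0, h1, rfl⟩ | ⟨θ, h0, h1, rfl⟩) | rfl)
    · exact ⟨B - (2*θ+1), Or.inr ⟨⟨(k:ℤ) + γ - θ, by omega⟩, by omega, by omega, by omega⟩,
        by rw [show B - (B - (2*θ+1)) = 2*θ+1 by ring]⟩
    · refine ⟨4*(t:ℤ)+8-2*θ, Or.inr ⟨⟨2*(t:ℤ)+4-θ, by ring⟩, by omega, by omega, by omega⟩, ?_⟩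
      congr 1
      omega
    · exact ⟨0, Or.inl rfl, by rw [show B - 0 = 2*(k:ℤ) + (2*γ+1) by omega]⟩
  · rintro ⟨d, (rfl | ⟨⟨c, hc⟩, h1, h2, h3⟩), rfl⟩
    · right
      rw [show B - 0 = 2*(k:ℤ) + (2*γ+1) by omega]
    · by_cases h4 : d ≤ 4*t+4
      · left; right
        refine ⟨2*(t:ℤ)+4-c, by omega, by omega, ?_⟩
        congr 1
        omega
      · left; left
        refine ⟨(k:ℤ) + γ - c, by omega, by omega, ?_⟩
        congr 1
        omega

theorem stmt6 (ℓ t k n : ℕ) (γ : ℤ)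
    (hℓe : Even ℓ) (hℓ : 4 ≤ ℓ) (ht : 1 ≤ t)
    (hγ1 : 1 ≤ (ℓ : ℤ) + 3 - 4 * ((t : ℤ) + 2) + γ * (2 * (ℓ : ℤ) + 2))
    (hγ2 : (ℓ : ℤ) + 3 - 4 * ((t : ℤ) + 2) + γ * (2 * (ℓ : ℤ) + 2) ≤ 2 * (ℓ : ℤ) + 2)
    (hk : 4 * (t : ℤ) + 2 * (ℓ : ℤ) + 2 * |γ| + 2 ≤ (k : ℤ))
    (hn : (n : ℤ) = (2 * (ℓ : ℤ) + 2) * (k : ℤ) +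
      ((ℓ : ℤ) + 3 - 4 * ((t : ℤ) + 2) + γ * (2 * (ℓ : ℤ) + 2)))
    (M : ℤ) (hM : M = (ℓ : ℤ) * (2 * (k : ℤ) + (2 * γ + 1))) :
    M < (n : ℤ) ∧
    sumset ℓ (Splus n t k γ) =
      {x : ZMod n | Even x.val ∧ (ℓ : ℤ) ≤ (x.val : ℤ) ∧ (x.val : ℤ) ≤ M} \
        ({x : ZMod n | Even x.val ∧ M - 2 * t - 2 ≤ (x.val : ℤ) ∧ (x.val : ℤ) ≤ M - 2} ∪
          {x : ZMod n | (x.val : ℤ) = M - 4 * t - 6}) := by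
  have habs1 := neg_abs_le γ
  have habs2 := le_abs_self γ
  have hℓ' : (4:ℤ) ≤ (ℓ:ℤ) := by exact_mod_cast hℓ
  have ht' : (1:ℤ) ≤ (t:ℤ) := by exact_mod_cast ht
  have hnM : (n:ℤ) - M = 2*(k:ℤ) + 2*γ - 4*(t:ℤ) - 5 := by rw [hn, hM]; ring
  have hMn : M < (n:ℤ) := by linarith
  obtain ⟨B, hBdef⟩ : ∃ x:ℤ, x = 2*(k:ℤ)+2*γ+1 := ⟨_, rfl⟩
  have hB : 8*(t:ℤ)+20 ≤ B - 1 := by rw [hBdef]; linarith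
  have hBe : Even (B-1) := ⟨(k:ℤ)+γ, by omega⟩
  have hMB : (ℓ:ℤ)*B = M := by rw [hM, hBdef]; ring
  have hLM : ((ℓ:ℕ):ℤ)*(B-1) = M - (ℓ:ℤ) := by rw [hM, hBdef]; ring
  obtain ⟨c, hc⟩ := hℓe
  have hMe : Even M := ⟨(c:ℤ)*(2*(k:ℤ)+2*γ+1), by rw [hM]; push_cast [hc]; ring⟩
  have hn0 : 0 < n := by
    have hprod : (0:ℤ) ≤ (2*(ℓ:ℤ)+2)*(k:ℤ) :=
      mul_nonneg (by positivity) (by positivity)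
    have h1 : (0:ℤ) < (n:ℤ) := by linarith
    exact_mod_cast h1
  haveI : NeZero n := ⟨hn0.ne'⟩
  refine ⟨hMn, ?_⟩
  have hSp := Splus_eq_image_s6 n t k γ ht' B hBdef hB
  have hchain : sumset ℓ (Splus n t k γ) =
      (fun z : ℤ => (z : ZMod n)) ''
        {z : ℤ | Even z ∧ (ℓ:ℤ) ≤ z ∧ z ≤ M ∧ (z = M ∨ z ≤ M - 2*(t:ℤ) - 4) ∧
          z ≠ M - 4*(t:ℤ) - 6} := by
    rw [hSp, sumset_image_cast]
    have hsets : sumset ℓ ((fun d => B - d) '' Dset (t:ℤ) B) =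
        {z : ℤ | Even z ∧ (ℓ:ℤ) ≤ z ∧ z ≤ M ∧ (z = M ∨ z ≤ M - 2*(t:ℤ) - 4) ∧
          z ≠ M - 4*(t:ℤ) - 6} := by
      ext z
      rw [Set.mem_setOf_eq, mem_sumset_reflect, sumset_Dset (t:ℤ) B ht' hB hBe ℓ _ rfl]
      simp only [Set.mem_setOf_eq]
      rw [hLM, hMB]
      obtain ⟨m2, hm2⟩ := hMe
      constructor
      · rintro ⟨⟨w, hw⟩, h0, h1, h2, h3⟩
        exact ⟨⟨m2 - w, by omega⟩, by omega, by omega, by omega, by omega⟩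
      · rintro ⟨⟨w, hw⟩, h0, h1, h2, h3⟩
        exact ⟨⟨m2 - w, by omega⟩, by omega, by omega, by omega, by omega⟩
    rw [hsets]
  rw [hchain]
  obtain ⟨m2, hm2⟩ := hMe
  ext x
  simp only [Set.mem_image, Set.mem_setOf_eq, Set.mem_diff, Set.mem_union]
  constructor
  · rintro ⟨z, ⟨⟨w, hw⟩, hz1, hz2, hz3, hz4⟩, rfl⟩
    have h0z : (0:ℤ) ≤ z := le_trans (by positivity) hz1
    have hzn : z < (n:ℤ) := lt_of_le_of_lt hz2 hMn
    have hval : (((z : ZMod n).val : ℤ)) = z := by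
      rw [ZMod.val_intCast]
      exact Int.emod_eq_of_lt h0z (by exact_mod_cast hzn)
    refine ⟨⟨?_, by omega, by omega⟩, ?_⟩
    · rw [← Int.even_coe_nat, hval]
      exact ⟨w, hw⟩
    · rintro (⟨-, ha, hb⟩ | hceq) <;> omega
  · rintro ⟨⟨he, h1, h2⟩, hneg⟩
    have he' : Even ((x.val : ℤ)) := (Int.even_coe_nat _).mpr he
    obtain ⟨w, hw⟩ := he'
    have hnot : ¬(M - 2*(t:ℤ) - 2 ≤ (x.val:ℤ) ∧ (x.val:ℤ) ≤ M - 2) :=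
      fun hc => hneg (Or.inl ⟨he, hc.1, hc.2⟩)
    have hne : (x.val:ℤ) ≠ M - 4*(t:ℤ) - 6 := fun hc => hneg (Or.inr hc)
    refine ⟨(x.val:ℤ), ⟨⟨w, hw⟩, h1, h2, by omega, hne⟩, ?_⟩
    push_cast
    exact ZMod.natCast_rightInverse x
end

section
/- With ℓ, t, γ, j, k, r, n, S⁺ and S⁻ chosen as in the construction and M = ℓ(2k+j), computing in ℤ_n with elements identified with their least residues: S⁻ = {M−4t−6} ∪ [M−2t−2, M−2]_e ∪ [M+2, n−1]_e, and ℤ_n is the disjoint union of the six sets [0, ℓ−2]_e, S⁺, ℓS⁻, ℓS⁺, S⁻, and [n−ℓ+2, n−2]_o. -/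
def IsSum (S : Set ℤ) (m : ℕ) (z : ℤ) : Prop :=
  ∃ f : Fin m → ℤ, (∀ i, f i ∈ S) ∧ ∑ i, f i = z

lemma IsSum.mono {S T : Set ℤ} (h : S ⊆ T) {m z} : IsSum S m z → IsSum T m z := by
  rintro ⟨f, hf, rfl⟩; exact ⟨f, fun i => h (hf i), rfl⟩

lemma IsSum.add {S : Set ℤ} {c d : ℕ} {z w : ℤ} (hz : IsSum S c z) (hw : IsSum S d w) :
    IsSum S (c + d) (z + w) := by
  obtain ⟨f, hf, rfl⟩ := hz
  obtain ⟨g, hg, rfl⟩ := hw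
  refine ⟨Fin.append f g, fun i => ?_, ?_⟩
  · rcases lt_or_ge (i : ℕ) c with h | h
    · have : Fin.append f g i = f (i.castLT h) := by
        simp [Fin.append, Fin.addCases, h]
      rw [this]; exact hf _
    · have hi : (i : ℕ) - c < d := by omega
      have : Fin.append f g i = g ⟨(i : ℕ) - c, hi⟩ := by
        simp [Fin.append, Fin.addCases, Nat.not_lt.mpr h, Fin.subNat, Fin.cast]
      rw [this]; exact hg _
  · rw [Fin.sum_univ_add]; simp

lemma IsSum.single {S : Set ℤ} {s : ℤ} (h : s ∈ S) : IsSum S 1 s :=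
  ⟨fun _ => s, fun _ => h, by simp⟩

lemma IsSum.zero {S : Set ℤ} : IsSum S 0 0 :=
  ⟨fun i => i.elim0, fun i => i.elim0, by simp⟩

lemma IsSum.const {S : Set ℤ} {s : ℤ} (h : s ∈ S) (m : ℕ) : IsSum S m ((m : ℤ) * s) :=
  ⟨fun _ => s, fun _ => h, by simp [Finset.sum_const, mul_comm]⟩

/-- sums of `c` odd numbers from `[1, L]` realize everything of the right parity in `[c, cL]`. -/
lemma isSum_oddInterval (L : ℤ) (hL : L % 2 = 1) (h1 : 1 ≤ L) :
    ∀ (c : ℕ) (z : ℤ), (c : ℤ) ≤ z → z ≤ c * L → (z - c) % 2 = 0 →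
      IsSum {s : ℤ | s % 2 = 1 ∧ 1 ≤ s ∧ s ≤ L} c z := by
  intro c
  induction c with
  | zero =>
    intro z hz1 hz2 _
    have : z = 0 := by push_cast at hz1 hz2; omega
    subst this; exact IsSum.zero
  | succ c ih =>
    intro z hz1 hz2 hp
    have hcc : (c : ℤ) ≤ c * L := le_mul_of_one_le_right (by positivity) h1
    obtain ⟨X, hX⟩ : ∃ X, (c : ℤ) * L = X := ⟨_, rfl⟩
    have hX2 : ((c : ℤ) + 1) * L = X + L := by rw [← hX]; ring
    have hXp : X % 2 = (c : ℤ) % 2 := by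
      rw [← hX, Int.mul_emod, hL, mul_one, Int.emod_emod_of_dvd _ (dvd_refl 2)]
    rw [hX] at hcc
    push_cast at hz1 hz2 hp
    rw [hX2] at hz2
    set y : ℤ := if z - X ≤ 1 then 1 else z - X with hy
    have hymem : y ∈ {s : ℤ | s % 2 = 1 ∧ 1 ≤ s ∧ s ≤ L} := by
      constructor
      · by_cases h : z - X ≤ 1 <;> simp [hy, h] <;> omega
      constructor
      · by_cases h : z - X ≤ 1 <;> simp [hy, h] <;> omega
      · by_cases h : z - X ≤ 1 <;> simp [hy, h] <;> omega
    have hrec : IsSum {s : ℤ | s % 2 = 1 ∧ 1 ≤ s ∧ s ≤ L} c (z - y) := by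
      apply ih <;> [skip; rw [hX]; skip] <;> by_cases h : z - X ≤ 1 <;> simp [hy, h] <;> omega
    have := hrec.add (IsSum.single hymem)
    simpa using this

/-- integer model of `S⁺`. -/
def SZ (L : ℤ) (t : ℕ) (P : ℤ) : Set ℤ :=
  {s : ℤ | s % 2 = 1 ∧ 1 ≤ s ∧ s ≤ L} ∪
    {s : ℤ | s % 2 = 1 ∧ L + 4 ≤ s ∧ s ≤ L + 2 * t + 4} ∪ {P}

lemma mem_SZ_iff {L : ℤ} {t : ℕ} {P s : ℤ} :
    s ∈ SZ L t P ↔ (s % 2 = 1 ∧ 1 ≤ s ∧ s ≤ L) ∨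
      (s % 2 = 1 ∧ L + 4 ≤ s ∧ s ≤ L + 2 * t + 4) ∨ s = P := by
  simp only [SZ, Set.mem_union, Set.mem_setOf_eq, Set.mem_singleton_iff]
  tauto

lemma sum_zero_or_ge {ι : Type*} (m : ℤ) (s : Finset ι) (d : ι → ℤ)
    (h : ∀ i ∈ s, d i = 0 ∨ (0 ≤ d i ∧ m ≤ d i)) :
    (∑ i ∈ s, d i) = 0 ∨ m ≤ ∑ i ∈ s, d i := by
  by_cases h0 : ∀ i ∈ s, d i = 0
  · left; exact Finset.sum_eq_zero h0
  · right
    push_neg at h0; obtain ⟨i, hi, hne⟩ := h0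
    have hd := h i hi
    have hdm : m ≤ d i := by tauto
    have hle : d i ≤ ∑ j ∈ s, d j := by
      apply Finset.single_le_sum (fun j hj => ?_) hi
      rcases h j hj with h' | h' <;> omega
    linarith

lemma fwd (t ℓ : ℕ) (L P M : ℤ) (hL : L % 2 = 1) (hLlb : 4 * (t : ℤ) + 9 ≤ L)
    (hP : P = L + 4 * t + 8) (hM : M = ℓ * P) (e : ℤ) (h : IsSum (SZ L t P) ℓ e) :
    e % 2 = (ℓ : ℤ) % 2 ∧ (ℓ : ℤ) ≤ e ∧ e ≤ M ∧
      (e ≤ M - 4 * t - 8 ∨ (M - 4 * t - 4 ≤ e ∧ e ≤ M - 2 * t - 4) ∨ e = M) := by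
  obtain ⟨f, hf, rfl⟩ := h
  have hfprop : ∀ i, (f i) % 2 = 1 ∧ 1 ≤ f i ∧ f i ≤ P := by
    intro i
    rcases mem_SZ_iff.1 (hf i) with h' | h' | h' <;> omega
  have hd : ∀ i, (P - f i) = 0 ∨ (2 * (t:ℤ) + 4 ≤ P - f i ∧ P - f i ≤ 4 * t + 4) ∨
      (4 * (t:ℤ) + 8 ≤ P - f i) := by
    intro i
    rcases mem_SZ_iff.1 (hf i) with h' | h' | h' <;> omega
  have hDsum : ∑ i, (P - f i) = (ℓ : ℤ) * P - ∑ i, f i := by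
    rw [Finset.sum_sub_distrib, Finset.sum_const, Finset.card_univ, Fintype.card_fin]
    push_cast; ring
  obtain ⟨e, he⟩ : ∃ e, ∑ i, f i = e := ⟨_, rfl⟩
  obtain ⟨D, hD⟩ : ∃ D, ∑ i, (P - f i) = D := ⟨_, rfl⟩
  rw [he, hD, ← hM] at hDsum
  rw [he]
  -- parity
  have hpar : e % 2 = (ℓ : ℤ) % 2 := by
    have := Finset.sum_int_mod (Finset.univ : Finset (Fin ℓ)) 2 f
    rw [he] at this
    rw [Finset.sum_congr rfl (fun i _ => (hfprop i).1)] at this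
    simpa using this
  -- bounds
  have hlb : (ℓ : ℤ) ≤ e := by
    rw [← he]
    calc (ℓ : ℤ) = ∑ _i : Fin ℓ, (1 : ℤ) := by simp
    _ ≤ ∑ i, f i := Finset.sum_le_sum (fun i _ => (hfprop i).2.1)
  have hub : e ≤ M := by
    rw [← he, hM]
    calc ∑ i, f i ≤ ∑ _i : Fin ℓ, P := Finset.sum_le_sum (fun i _ => (hfprop i).2.2)
    _ = ℓ * P := by simp [mul_comm]
  refine ⟨hpar, hlb, hub, ?_⟩
  -- now the key disjunction
  have h1 : D = 0 ∨ 2 * (t:ℤ) + 4 ≤ D := by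
    rw [← hD]
    apply sum_zero_or_ge
    intro i _
    rcases hd i with h' | h' | h' <;> omega
  rcases h1 with h1 | h1
  · right; right; omega
  by_cases h2 : 4 * (t:ℤ) + 8 ≤ D
  · left; omega
  -- 2t+4 ≤ D ≤ 4t+7 : show D ≤ 4t+4
  push_neg at h2
  obtain ⟨i0, hi0⟩ : ∃ i0, P - f i0 ≠ 0 := by
    by_contra hcon
    push_neg at hcon
    have : D = 0 := by rw [← hD]; exact Finset.sum_eq_zero (fun i _ => hcon i)
    omega
  have hsplit : P - f i0 + ∑ i ∈ Finset.univ.erase i0, (P - f i) = D := by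
    rw [← hD, Finset.add_sum_erase _ (fun i => P - f i) (Finset.mem_univ i0)]
  have hrest : (∑ i ∈ Finset.univ.erase i0, (P - f i)) = 0 ∨
      2 * (t:ℤ) + 4 ≤ ∑ i ∈ Finset.univ.erase i0, (P - f i) := by
    apply sum_zero_or_ge
    intro i _
    rcases hd i with h' | h' | h' <;> omega
  have hle : P - f i0 ≤ D := by
    have h0 : 0 ≤ ∑ i ∈ Finset.univ.erase i0, (P - f i) := by
      apply Finset.sum_nonneg; intro i _; rcases hd i with h' | h' | h' <;> omega
    omega
  rcases hd i0 with h' | h' | h' <;> rcases hrest with hr | hr <;> omega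

lemma bwd_main (t ℓ : ℕ) (L P : ℤ) (hL : L % 2 = 1) (hP : P = L + 4 * t + 8)
    (hℓ4 : 4 ≤ ℓ) (hLlb : 4 * (t : ℤ) + 4 * ℓ - 3 ≤ L) :
    ∀ m : ℕ, 1 ≤ m → m ≤ ℓ → ∀ e : ℤ, e % 2 = (m : ℤ) % 2 → (m : ℤ) ≤ e →
      e ≤ m * P - 4 * t - 8 → IsSum (SZ L t P) m e := by
  intro m
  induction m with
  | zero => omega
  | succ m ih =>
    intro _ hmℓ e hpar hlb hub
    rcases Nat.eq_zero_or_pos m with hm0 | hm1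
    · subst hm0
      apply IsSum.mono (fun s hs => mem_SZ_iff.mpr (Or.inl hs))
      refine IsSum.single ?_
      push_cast at hpar hlb hub ⊢
      exact ⟨by omega, by omega, by omega⟩
    · have hmP : ((m : ℤ) + 1) * P = (m : ℤ) * P + P := by ring
      push_cast at hpar hlb hub
      rw [hmP] at hub
      by_cases hcase : (m : ℤ) + P ≤ e
      · -- peel off one P
        have hPmem : P ∈ SZ L t P := by rw [mem_SZ_iff]; tauto
        have hrec : IsSum (SZ L t P) m (e - P) := by
          apply ih (by omega) (by omega)
          · omega
          · omega
          · omega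
        have := hrec.add (IsSum.single hPmem)
        simpa using this
      · -- all from the small interval
        push_neg at hcase
        apply IsSum.mono (fun s hs => mem_SZ_iff.mpr (Or.inl hs))
        apply isSum_oddInterval L hL (by omega)
        · push_cast; omega
        · -- e ≤ (m+1) * L
          have hmZ : (1 : ℤ) ≤ (m : ℤ) := by exact_mod_cast hm1
          have hmlZ : (m : ℤ) ≤ (ℓ : ℤ) := by exact_mod_cast (by omega : m ≤ ℓ)
          have hlZ : (4 : ℤ) ≤ (ℓ : ℤ) := by exact_mod_cast hℓ4
          have h2L : 2 * L ≤ ((m : ℤ) + 1) * L := by nlinarith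
          push_cast
          nlinarith
        · push_cast; omega

lemma bwd (t ℓ : ℕ) (L P M : ℤ) (hL : L % 2 = 1) (hP : P = L + 4 * t + 8)
    (hℓ4 : 4 ≤ ℓ) (hℓe : (ℓ : ℤ) % 2 = 0) (hLlb : 4 * (t : ℤ) + 4 * ℓ - 3 ≤ L)
    (hM : M = ℓ * P) (e : ℤ) (hpar : e % 2 = 0)
    (h : ((ℓ : ℤ) ≤ e ∧ e ≤ M - 4 * t - 8) ∨ (M - 4 * t - 4 ≤ e ∧ e ≤ M - 2 * t - 4) ∨ e = M) :
    IsSum (SZ L t P) ℓ e := by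
  have hPodd : P % 2 = 1 := by omega
  rcases h with ⟨h1, h2⟩ | ⟨h1, h2⟩ | h1
  · apply bwd_main t ℓ L P hL hP hℓ4 hLlb ℓ (by omega) le_rfl e (by omega) h1 (by rw [← hM]; omega)
  · -- (ℓ-1) copies of P plus one element of I₂
    obtain ⟨m, rfl⟩ : ∃ m, ℓ = m + 1 := ⟨ℓ - 1, by omega⟩
    have hPmem : P ∈ SZ L t P := by rw [mem_SZ_iff]; tauto
    have hconst := IsSum.const hPmem m
    have hmM : ((m : ℤ) + 1) * P = (m : ℤ) * P + P := by ring
    push_cast at hM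
    rw [hmM] at hM
    have hmodd : (m : ℤ) % 2 = 1 := by push_cast at hℓe ⊢; omega
    have hmPodd : ((m : ℤ) * P) % 2 = 1 := by
      rw [Int.mul_emod, hmodd, hPodd]; decide
    obtain ⟨X, hX⟩ : ∃ X, (m : ℤ) * P = X := ⟨_, rfl⟩
    rw [hX] at hM hmPodd hconst
    have hqmem : e - X ∈ SZ L t P := by
      rw [mem_SZ_iff]; right; left; exact ⟨by omega, by omega, by omega⟩
    have := hconst.add (IsSum.single hqmem)
    simpa using this
  · subst h1; rw [hM]; exact IsSum.const (by rw [mem_SZ_iff]; tauto) ℓ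
set_option maxHeartbeats 2000000 in
theorem stmt7 (ℓ t k n : ℕ) (γ : ℤ)
    (hℓe : Even ℓ) (hℓ : 4 ≤ ℓ) (ht : 1 ≤ t)
    (hγ1 : 1 ≤ (ℓ : ℤ) + 3 - 4 * ((t : ℤ) + 2) + γ * (2 * (ℓ : ℤ) + 2))
    (hγ2 : (ℓ : ℤ) + 3 - 4 * ((t : ℤ) + 2) + γ * (2 * (ℓ : ℤ) + 2) ≤ 2 * (ℓ : ℤ) + 2)
    (hk : 4 * (t : ℤ) + 2 * (ℓ : ℤ) + 2 * |γ| + 2 ≤ (k : ℤ))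
    (hn : (n : ℤ) = (2 * (ℓ : ℤ) + 2) * (k : ℤ) +
      ((ℓ : ℤ) + 3 - 4 * ((t : ℤ) + 2) + γ * (2 * (ℓ : ℤ) + 2)))
    (M : ℤ) (hM : M = (ℓ : ℤ) * (2 * (k : ℤ) + (2 * γ + 1))) :
    Sminus n t k γ =
      {x : ZMod n | (x.val : ℤ) = M - 4 * t - 6} ∪
        {x : ZMod n | Even x.val ∧ M - 2 * t - 2 ≤ (x.val : ℤ) ∧ (x.val : ℤ) ≤ M - 2} ∪
        {x : ZMod n | Even x.val ∧ M + 2 ≤ (x.val : ℤ) ∧ (x.val : ℤ) ≤ (n : ℤ) - 1} ∧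
    (⋃ i, ![({x : ZMod n | Even x.val ∧ (x.val : ℤ) ≤ (ℓ : ℤ) - 2} : Set (ZMod n)),
        Splus n t k γ, sumset ℓ (Sminus n t k γ), sumset ℓ (Splus n t k γ), Sminus n t k γ,
        {x : ZMod n | Odd x.val ∧ (n : ℤ) - ℓ + 2 ≤ (x.val : ℤ) ∧ (x.val : ℤ) ≤ (n : ℤ) - 2}] i)
      = Set.univ ∧
    Pairwise (Function.onFun Disjoint
      ![({x : ZMod n | Even x.val ∧ (x.val : ℤ) ≤ (ℓ : ℤ) - 2} : Set (ZMod n)),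
        Splus n t k γ, sumset ℓ (Sminus n t k γ), sumset ℓ (Splus n t k γ), Sminus n t k γ,
        {x : ZMod n | Odd x.val ∧ (n : ℤ) - ℓ + 2 ≤ (x.val : ℤ) ∧ (x.val : ℤ) ≤ (n : ℤ) - 2}]) := by
  classical
  -- Abbreviations and basic arithmetic facts
  obtain ⟨L, hLdef⟩ : ∃ L : ℤ, 2 * (k : ℤ) + 2 * γ - 4 * (t : ℤ) - 7 = L := ⟨_, rfl⟩
  obtain ⟨P, hPdef⟩ : ∃ P : ℤ, 2 * (k : ℤ) + (2 * γ + 1) = P := ⟨_, rfl⟩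
  have hP : P = L + 4 * t + 8 := by omega
  have hLmod : L % 2 = 1 := by omega
  have hlZ : (4 : ℤ) ≤ (ℓ : ℤ) := by exact_mod_cast hℓ
  have htZ : (1 : ℤ) ≤ (t : ℤ) := by exact_mod_cast ht
  have hℓZe : (ℓ : ℤ) % 2 = 0 := by
    obtain ⟨u, hu⟩ := hℓe; subst hu; push_cast; omega
  have hLlb : 4 * (t : ℤ) + 4 * (ℓ : ℤ) - 3 ≤ L := by
    have h1 := abs_nonneg γ
    have h2 := neg_abs_le γ
    linarith
  have hMP : M = (ℓ : ℤ) * P := by rw [hM, hPdef]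
  have hnM : (n : ℤ) = M + L + 2 := by rw [hn, hM, ← hLdef]; ring
  have hPpos : (0 : ℤ) < P := by omega
  have hM4P : 4 * P ≤ M := by
    have h1 : (0 : ℤ) ≤ ((ℓ : ℤ) - 4) * P := mul_nonneg (by omega) hPpos.le
    have h2 : ((ℓ : ℤ) - 4) * P = (ℓ : ℤ) * P - 4 * P := by ring
    linarith [hMP]
  have hnZpos : (0 : ℤ) < (n : ℤ) := by omega
  have hnpos : 0 < n := by exact_mod_cast hnZpos
  haveI : NeZero n := ⟨hnpos.ne'⟩
  have hMe : M % 2 = 0 := by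
    obtain ⟨u, hu⟩ := hℓe
    have : M = 2 * ((u : ℤ) * P) := by rw [hMP, hu]; push_cast; ring
    omega
  -- ZMod helpers
  have valcast : ∀ e : ℤ, 0 ≤ e → e < (n : ℤ) → (((e : ZMod n)).val : ℤ) = e := by
    intro e h1 h2
    rw [ZMod.val_intCast]
    exact Int.emod_eq_of_lt h1 h2
  have selfcast' : ∀ x : ZMod n, ((x.val : ZMod n)) = x := by
    intro x
    rw [ZMod.natCast_val, ZMod.cast_id]
  have selfcast : ∀ x : ZMod n, (((x.val : ℤ)) : ZMod n) = x := by
    intro x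
    push_cast
    exact selfcast' x
  have valbound : ∀ x : ZMod n, 0 ≤ (x.val : ℤ) ∧ (x.val : ℤ) < (n : ℤ) := by
    intro x
    exact ⟨Int.natCast_nonneg _, by exact_mod_cast ZMod.val_lt x⟩
  have hvne : ∀ x : ZMod n, x ≠ 0 → (x.val : ℤ) ≠ 0 := by
    intro x hx h0
    apply hx
    rw [← selfcast x, h0]
    simp
  have hnegval : ∀ x : ZMod n, x ≠ 0 → ((-x).val : ℤ) = (n : ℤ) - (x.val : ℤ) := by
    intro x hx
    rw [ZMod.neg_val, if_neg hx]
    push_cast [Nat.cast_sub (ZMod.val_lt x).le]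
    ring
  have hEvenIff : ∀ x : ZMod n, Even x.val ↔ (x.val : ℤ) % 2 = 0 := by
    intro x
    rw [← Int.even_coe_nat, Int.even_iff]
  have hOddIff : ∀ x : ZMod n, Odd x.val ↔ (x.val : ℤ) % 2 = 1 := by
    intro x
    rw [← Int.odd_coe_nat, Int.odd_iff]
  -- characterization of S⁺ via val
  have hSplusIff : ∀ x : ZMod n, x ∈ Splus n t k γ ↔ ((x.val : ℤ) ∈ SZ L t P) := by
    intro x
    simp only [Splus, Set.mem_union, Set.mem_setOf_eq, Set.mem_singleton_iff]
    constructor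
    · rintro ((⟨θ, h0, h1, rfl⟩ | ⟨θ, h0, h1, rfl⟩) | rfl)
      · rw [valcast _ (by omega) (by omega), mem_SZ_iff]
        left; exact ⟨by omega, by omega, by omega⟩
      · rw [valcast _ (by omega) (by omega), mem_SZ_iff]
        right; left; exact ⟨by omega, by omega, by omega⟩
      · rw [valcast _ (by omega) (by omega), mem_SZ_iff]
        right; right; omega
    · intro hm
      rw [mem_SZ_iff] at hm
      rcases hm with ⟨hs1, hs2, hs3⟩ | ⟨hs1, hs2, hs3⟩ | hs
      · left; left
        obtain ⟨v, hv⟩ : ∃ v : ℤ, (x.val : ℤ) = v := ⟨_, rfl⟩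
        rw [hv] at hs1 hs2 hs3
        refine ⟨(v - 1) / 2, by omega, by omega, ?_⟩
        calc x = ((x.val : ℤ) : ZMod n) := (selfcast x).symm
        _ = _ := by rw [hv]; exact congrArg _ (by omega)
      · left; right
        obtain ⟨v, hv⟩ : ∃ v : ℤ, (x.val : ℤ) = v := ⟨_, rfl⟩
        rw [hv] at hs1 hs2 hs3
        refine ⟨(v - L) / 2, by omega, by omega, ?_⟩
        calc x = ((x.val : ℤ) : ZMod n) := (selfcast x).symm
        _ = _ := by rw [hv]; exact congrArg _ (by omega)
      · right
        obtain ⟨v, hv⟩ : ∃ v : ℤ, (x.val : ℤ) = v := ⟨_, rfl⟩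
        rw [hv] at hs
        calc x = ((x.val : ℤ) : ZMod n) := (selfcast x).symm
        _ = _ := by rw [hv]; exact congrArg _ (by omega)
  -- sumset of S⁺ via integer sums
  have hsumIff : ∀ x : ZMod n, x ∈ sumset ℓ (Splus n t k γ) ↔
      ∃ e : ℤ, IsSum (SZ L t P) ℓ e ∧ x = ((e : ℤ) : ZMod n) := by
    intro x
    constructor
    · rintro ⟨f, hf, rfl⟩
      refine ⟨∑ i, ((f i).val : ℤ),
        ⟨fun i => ((f i).val : ℤ), fun i => (hSplusIff _).1 (hf i), rfl⟩, ?_⟩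
      push_cast
      exact (Finset.sum_congr rfl fun i _ => (selfcast' (f i)).symm)
    · rintro ⟨e, ⟨g, hg, rfl⟩, rfl⟩
      refine ⟨fun i => ((g i : ℤ) : ZMod n), fun i => ?_, ?_⟩
      · rw [hSplusIff]
        have hb : 1 ≤ g i ∧ g i ≤ P := by
          rcases mem_SZ_iff.1 (hg i) with h | h | h <;> omega
        rw [valcast _ (by omega) (by omega)]
        exact hg i
      · push_cast
        rfl
  -- arithmetic characterization of ℓ-fold sumset of S⁺
  have hEZIff : ∀ x : ZMod n, x ∈ sumset ℓ (Splus n t k γ) ↔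
      ((x.val : ℤ) % 2 = 0 ∧ (((ℓ : ℤ) ≤ (x.val : ℤ) ∧ (x.val : ℤ) ≤ M - 4 * t - 8) ∨
        (M - 4 * t - 4 ≤ (x.val : ℤ) ∧ (x.val : ℤ) ≤ M - 2 * t - 4) ∨ (x.val : ℤ) = M)) := by
    intro x
    rw [hsumIff]
    constructor
    · rintro ⟨e, hIs, rfl⟩
      obtain ⟨hpar, hlb, hub, hdis⟩ := fwd t ℓ L P M hLmod (by omega) hP hMP e hIs
      rw [valcast e (by omega) (by omega)]
      refine ⟨by omega, ?_⟩
      rcases hdis with h | h | h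
      exacts [Or.inl ⟨hlb, h⟩, Or.inr (Or.inl h), Or.inr (Or.inr h)]
    · rintro ⟨hpar, hdis⟩
      exact ⟨(x.val : ℤ), bwd t ℓ L P M hLmod hP hℓ hℓZe hLlb hMP _ hpar hdis,
        (selfcast x).symm⟩
  -- negation characterizations
  have hnegIff : ∀ x : ZMod n, x ∈ Sminus n t k γ ↔ -x ∈ Splus n t k γ := by
    intro x
    constructor
    · rintro ⟨s, hs, rfl⟩; simpa using hs
    · intro h; exact ⟨-x, h, neg_neg x⟩
  have hnegsumIff : ∀ x : ZMod n,
      x ∈ sumset ℓ (Sminus n t k γ) ↔ -x ∈ sumset ℓ (Splus n t k γ) := by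
    intro x
    constructor
    · rintro ⟨f, hf, rfl⟩
      refine ⟨fun i => -f i, fun i => ?_, by simp⟩
      obtain ⟨s, hs, hse⟩ := hf i
      show -f i ∈ Splus n t k γ
      rw [← hse, neg_neg]
      exact hs
    · rintro ⟨g, hg, hgs⟩
      refine ⟨fun i => -g i, fun i => ⟨g i, hg i, rfl⟩, ?_⟩
      have : ∑ i, -g i = -∑ i, g i := by simp
      rw [this, hgs, neg_neg]
  -- the six arithmetic characterizations
  have hq1 : ∀ x : ZMod n, x ∈ ({x : ZMod n | Even x.val ∧ (x.val : ℤ) ≤ (ℓ : ℤ) - 2}) ↔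
      ((x.val : ℤ) % 2 = 0 ∧ (x.val : ℤ) ≤ (ℓ : ℤ) - 2) := by
    intro x
    simp only [Set.mem_setOf_eq, hEvenIff x]
  have hq2 : ∀ x : ZMod n, x ∈ Splus n t k γ ↔
      (((x.val : ℤ) % 2 = 1 ∧ 1 ≤ (x.val : ℤ) ∧ (x.val : ℤ) ≤ L) ∨
       ((x.val : ℤ) % 2 = 1 ∧ L + 4 ≤ (x.val : ℤ) ∧ (x.val : ℤ) ≤ L + 2 * t + 4) ∨
       (x.val : ℤ) = P) := by
    intro x
    rw [hSplusIff x, mem_SZ_iff]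
  have hq3 : ∀ x : ZMod n, x ∈ sumset ℓ (Sminus n t k γ) ↔
      ((x.val : ℤ) % 2 = 1 ∧ ((x.val : ℤ) = L + 2 ∨
        (L + 2 * t + 6 ≤ (x.val : ℤ) ∧ (x.val : ℤ) ≤ P - 2) ∨
        (P + 2 ≤ (x.val : ℤ) ∧ (x.val : ℤ) ≤ (n : ℤ) - (ℓ : ℤ)))) := by
    intro x
    rw [hnegsumIff x, hEZIff (-x)]
    by_cases hx : x = 0
    · subst hx
      simp only [neg_zero, ZMod.val_zero, Nat.cast_zero]
      omega
    · rw [hnegval x hx]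
      have h1 := hvne x hx
      have h2 := valbound x
      clear hsumIff hSplusIff hnegIff hnegsumIff hnegval hvne hEvenIff hOddIff
      clear valcast selfcast selfcast' valbound hEZIff
      clear hn hM hγ1 hγ2 hk hMP hLdef hPdef hℓe
      omega
  have hq5 : ∀ x : ZMod n, x ∈ Sminus n t k γ ↔
      ((x.val : ℤ) = M - 4 * t - 6 ∨
       ((x.val : ℤ) % 2 = 0 ∧ M - 2 * t - 2 ≤ (x.val : ℤ) ∧ (x.val : ℤ) ≤ M - 2) ∨
       ((x.val : ℤ) % 2 = 0 ∧ M + 2 ≤ (x.val : ℤ) ∧ (x.val : ℤ) ≤ (n : ℤ) - 1)) := by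
    intro x
    rw [hnegIff x, hSplusIff (-x), mem_SZ_iff]
    by_cases hx : x = 0
    · subst hx
      simp only [neg_zero, ZMod.val_zero, Nat.cast_zero]
      omega
    · rw [hnegval x hx]
      have h1 := hvne x hx
      have h2 := valbound x
      clear hsumIff hSplusIff hnegIff hnegsumIff hnegval hvne hEvenIff hOddIff
      clear valcast selfcast selfcast' valbound hEZIff hq3
      clear hn hM hγ1 hγ2 hk hMP hLdef hPdef hℓe
      omega
  have hq6 : ∀ x : ZMod n, x ∈ ({x : ZMod n | Odd x.val ∧ (n : ℤ) - (ℓ : ℤ) + 2 ≤ (x.val : ℤ) ∧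
      (x.val : ℤ) ≤ (n : ℤ) - 2}) ↔
      ((x.val : ℤ) % 2 = 1 ∧ (n : ℤ) - (ℓ : ℤ) + 2 ≤ (x.val : ℤ) ∧ (x.val : ℤ) ≤ (n : ℤ) - 2) := by
    intro x
    simp only [Set.mem_setOf_eq, hOddIff x]
  refine ⟨?_, ?_, ?_⟩
  · -- S⁻ description
    ext x
    simp only [Set.mem_union, Set.mem_setOf_eq, hEvenIff x]
    rw [hq5 x]
    tauto
  · -- covering
    rw [Set.eq_univ_iff_forall]
    intro x
    rw [Set.mem_iUnion]
    have hb := valbound x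
    have hdis : ((x.val : ℤ) % 2 = 0 ∧ (x.val : ℤ) ≤ (ℓ : ℤ) - 2) ∨
        (((x.val : ℤ) % 2 = 1 ∧ 1 ≤ (x.val : ℤ) ∧ (x.val : ℤ) ≤ L) ∨
         ((x.val : ℤ) % 2 = 1 ∧ L + 4 ≤ (x.val : ℤ) ∧ (x.val : ℤ) ≤ L + 2 * t + 4) ∨
         (x.val : ℤ) = P) ∨
        ((x.val : ℤ) % 2 = 1 ∧ ((x.val : ℤ) = L + 2 ∨
          (L + 2 * t + 6 ≤ (x.val : ℤ) ∧ (x.val : ℤ) ≤ P - 2) ∨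
          (P + 2 ≤ (x.val : ℤ) ∧ (x.val : ℤ) ≤ (n : ℤ) - (ℓ : ℤ)))) ∨
        ((x.val : ℤ) % 2 = 0 ∧ (((ℓ : ℤ) ≤ (x.val : ℤ) ∧ (x.val : ℤ) ≤ M - 4 * t - 8) ∨
          (M - 4 * t - 4 ≤ (x.val : ℤ) ∧ (x.val : ℤ) ≤ M - 2 * t - 4) ∨ (x.val : ℤ) = M)) ∨
        ((x.val : ℤ) = M - 4 * t - 6 ∨
         ((x.val : ℤ) % 2 = 0 ∧ M - 2 * t - 2 ≤ (x.val : ℤ) ∧ (x.val : ℤ) ≤ M - 2) ∨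
         ((x.val : ℤ) % 2 = 0 ∧ M + 2 ≤ (x.val : ℤ) ∧ (x.val : ℤ) ≤ (n : ℤ) - 1)) ∨
        ((x.val : ℤ) % 2 = 1 ∧ (n : ℤ) - (ℓ : ℤ) + 2 ≤ (x.val : ℤ) ∧
          (x.val : ℤ) ≤ (n : ℤ) - 2) := by
      clear hq1 hq2 hq3 hq5 hq6 hEZIff hsumIff hSplusIff hnegIff hnegsumIff hnegval hvne
      clear hEvenIff hOddIff valcast selfcast selfcast' valbound
      clear hn hM hγ1 hγ2 hk hMP hLdef hPdef hℓe
      omega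
    rcases hdis with h | h | h | h | h | h
    · exact ⟨0, (hq1 x).2 h⟩
    · exact ⟨1, (hq2 x).2 h⟩
    · exact ⟨2, (hq3 x).2 h⟩
    · exact ⟨3, (hEZIff x).2 h⟩
    · exact ⟨4, (hq5 x).2 h⟩
    · exact ⟨5, (hq6 x).2 h⟩
  · -- pairwise disjoint
    intro i j hij
    simp only [Function.onFun]
    rw [Set.disjoint_left]
    intro x hxi hxj
    have hb := valbound x
    have hvec : ∀ m : Fin 6, x ∈
        ![({x : ZMod n | Even x.val ∧ (x.val : ℤ) ≤ (ℓ : ℤ) - 2} : Set (ZMod n)),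
          Splus n t k γ, sumset ℓ (Sminus n t k γ), sumset ℓ (Splus n t k γ), Sminus n t k γ,
          {x : ZMod n | Odd x.val ∧ (n : ℤ) - ℓ + 2 ≤ (x.val : ℤ) ∧ (x.val : ℤ) ≤ (n : ℤ) - 2}] m →
        (m = 0 ∧ ((x.val : ℤ) % 2 = 0 ∧ (x.val : ℤ) ≤ (ℓ : ℤ) - 2)) ∨
        (m = 1 ∧ (((x.val : ℤ) % 2 = 1 ∧ 1 ≤ (x.val : ℤ) ∧ (x.val : ℤ) ≤ L) ∨
            ((x.val : ℤ) % 2 = 1 ∧ L + 4 ≤ (x.val : ℤ) ∧ (x.val : ℤ) ≤ L + 2 * t + 4) ∨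
            (x.val : ℤ) = P)) ∨
        (m = 2 ∧ ((x.val : ℤ) % 2 = 1 ∧ ((x.val : ℤ) = L + 2 ∨
            (L + 2 * t + 6 ≤ (x.val : ℤ) ∧ (x.val : ℤ) ≤ P - 2) ∨
            (P + 2 ≤ (x.val : ℤ) ∧ (x.val : ℤ) ≤ (n : ℤ) - (ℓ : ℤ))))) ∨
        (m = 3 ∧ ((x.val : ℤ) % 2 = 0 ∧ (((ℓ : ℤ) ≤ (x.val : ℤ) ∧ (x.val : ℤ) ≤ M - 4 * t - 8) ∨
            (M - 4 * t - 4 ≤ (x.val : ℤ) ∧ (x.val : ℤ) ≤ M - 2 * t - 4) ∨ (x.val : ℤ) = M))) ∨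
        (m = 4 ∧ ((x.val : ℤ) = M - 4 * t - 6 ∨
            ((x.val : ℤ) % 2 = 0 ∧ M - 2 * t - 2 ≤ (x.val : ℤ) ∧ (x.val : ℤ) ≤ M - 2) ∨
            ((x.val : ℤ) % 2 = 0 ∧ M + 2 ≤ (x.val : ℤ) ∧ (x.val : ℤ) ≤ (n : ℤ) - 1))) ∨
        (m = 5 ∧ ((x.val : ℤ) % 2 = 1 ∧ (n : ℤ) - (ℓ : ℤ) + 2 ≤ (x.val : ℤ) ∧
            (x.val : ℤ) ≤ (n : ℤ) - 2)) := by
      intro m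
      fin_cases m
      · exact fun h => Or.inl ⟨rfl, (hq1 x).1 h⟩
      · exact fun h => Or.inr (Or.inl ⟨rfl, (hq2 x).1 h⟩)
      · exact fun h => Or.inr (Or.inr (Or.inl ⟨rfl, (hq3 x).1 h⟩))
      · exact fun h => Or.inr (Or.inr (Or.inr (Or.inl ⟨rfl, (hEZIff x).1 h⟩)))
      · exact fun h => Or.inr (Or.inr (Or.inr (Or.inr (Or.inl ⟨rfl, (hq5 x).1 h⟩))))
      · exact fun h => Or.inr (Or.inr (Or.inr (Or.inr (Or.inr ⟨rfl, (hq6 x).1 h⟩))))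
    have hIm := hvec i hxi
    have hJm := hvec j hxj
    clear hvec hxi hxj hq1 hq2 hq3 hq5 hq6 hEZIff hsumIff hSplusIff hnegIff hnegsumIff
    clear hnegval hvne hEvenIff hOddIff valcast selfcast selfcast' valbound
    clear hn hM hγ1 hγ2 hk hMP hLdef hPdef hℓe
    rcases hIm with ⟨rfl, hI⟩ | ⟨rfl, hI⟩ | ⟨rfl, hI⟩ | ⟨rfl, hI⟩ | ⟨rfl, hI⟩ | ⟨rfl, hI⟩ <;>
      rcases hJm with ⟨rfl, hJ⟩ | ⟨rfl, hJ⟩ | ⟨rfl, hJ⟩ | ⟨rfl, hJ⟩ | ⟨rfl, hJ⟩ | ⟨rfl, hJ⟩ <;>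
      first
      | exact absurd rfl hij
      | omega
end

section
/- Let ℓ ≥ 2 be even and let Γ be a finite abelian group with |Γ| = n. Suppose S ⊆ Γ is a symmetric set with 0 ∉ S such that R_ℓ(S) = Γ \ (S ∪ {0}) and 0 ∉ (ℓ+1)S. Then the Cayley graph Cay(Γ, S) is an |S|-regular n-vertex C_{ℓ+1}-saturated graph. -/
/-- `R_ℓ(S)`: sums `s₁ + ⋯ + s_ℓ` of elements of `S` in which no consecutive subsum
`s_i + s_{i+1} + ⋯ + s_j` with `i < j` vanishes. -/
def RSumset {Γ : Type*} [AddCommMonoid Γ] (m : ℕ) (S : Set Γ) : Set Γ :=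
  {x | ∃ f : Fin m → Γ, (∀ i, f i ∈ S) ∧ ∑ i, f i = x ∧
      ∀ i j : Fin m, i < j → ∑ a ∈ Finset.Icc i j, f a ≠ 0}

/-- The Cayley graph of a symmetric set `S` (with `0 ∉ S`) in an additive group:
distinct `x` and `y` are adjacent iff `x - y ∈ S`. -/
def cayley {Γ : Type*} [AddCommGroup Γ] (S : Set Γ) (hsym : ∀ s ∈ S, -s ∈ S) :
    SimpleGraph Γ where
  Adj x y := x ≠ y ∧ x - y ∈ S
  symm := by
    constructor
    rintro x y ⟨hxy, hmem⟩
    exact ⟨hxy.symm, by simpa [neg_sub] using hsym _ hmem⟩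
  loopless := ⟨fun x h => h.1 rfl⟩

/-- `G` contains a cycle of length `m`. -/
def HasCycleLength {V : Type*} (G : SimpleGraph V) (m : ℕ) : Prop :=
  ∃ (v : V) (w : G.Walk v v), w.IsCycle ∧ w.length = m

/-- `G` is `C_m`-saturated: it has no cycle of length `m`, but adding any edge between
two nonadjacent vertices creates a cycle of length `m`. -/
def CycleSaturated {V : Type*} (G : SimpleGraph V) (m : ℕ) : Prop :=
  ¬ HasCycleLength G m ∧
    ∀ x y : V, x ≠ y → ¬ G.Adj x y →
      HasCycleLength (G ⊔ SimpleGraph.fromEdgeSet {s(x, y)}) m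

/-!
A walk of length `m` from `u` to `v` in `Cay(Γ, S)` writes `u - v` as a sum of `m` elements
of `S`, so a cycle of length `ℓ + 1` would put `0` in `(ℓ + 1)S`. Conversely, if `x - y` is a
sum `s₁ + ⋯ + s_ℓ` in which no consecutive block vanishes, then the partial sums
`y, y + s₁, …, y + s₁ + ⋯ + s_ℓ = x` are pairwise distinct, since two of them differ by such a
block; they trace a path of length `ℓ` from `y` to `x`, which the new edge `xy` closes into a
cycle of length `ℓ + 1`. Regularity holds because the neighbourhood of `v` is `v - S`.
-/

namespace Fin

theorem partialSum_succ_sub_partialSum_castSucc {M : Type*} [AddCommGroup M] {m : ℕ}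
    (f : Fin m → M) {a b : Fin m} (hab : a ≤ b) :
    partialSum f b.succ - partialSum f a.castSucc = ∑ k ∈ Finset.Icc a b, f k := by
  have hsub : Finset.univ.filter (fun k : Fin m => k.val < a.val) ⊆
      Finset.univ.filter (fun k : Fin m => k.val < b.val + 1) := by
    intro k; simp only [Finset.mem_filter, Finset.mem_univ, true_and]; omega
  simp only [partialSum, List.sum_take_ofFn, val_succ, val_castSucc]
  rw [← Finset.sum_sdiff hsub, add_sub_cancel_right]
  refine Finset.sum_congr ?_ fun _ _ => rfl
  ext k
  simp only [Finset.mem_sdiff, Finset.mem_filter, Finset.mem_univ, true_and, Finset.mem_Icc,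
    le_def]
  omega

theorem partialSum_injective {M : Type*} [AddCommGroup M] {m : ℕ} {f : Fin m → M}
    (hf : ∀ a b, a ≤ b → ∑ k ∈ Finset.Icc a b, f k ≠ 0) : Function.Injective (partialSum f) := by
  refine Function.Injective.of_lt_imp_ne fun i j hij heq => ?_
  obtain ⟨a, rfl⟩ := exists_castSucc_eq.2 (ne_last_of_lt hij)
  obtain ⟨b, rfl⟩ := exists_succ_eq.2 (ne_zero_of_lt hij)
  have hab : a ≤ b := castSucc_lt_succ_iff.1 hij
  exact hf a b hab (by rw [← partialSum_succ_sub_partialSum_castSucc f hab, heq, sub_self])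

end Fin

namespace SimpleGraph

theorem exists_isPath_of_injective {V : Type*} {G : SimpleGraph V} {m : ℕ} (v : Fin (m + 1) → V)
    (hv : Function.Injective v) (hadj : ∀ i : Fin m, G.Adj (v i.castSucc) (v i.succ)) :
    ∃ p : G.Walk (v 0) (v (Fin.last m)), p.IsPath ∧ p.length = m := by
  have hne : List.ofFn v ≠ [] := by simp
  have hchain : (List.ofFn v).IsChain G.Adj := List.isChain_ofFn.2 fun i hi => hadj ⟨i, by omega⟩
  refine ⟨(Walk.ofSupport _ hne hchain).copy (by simp) (List.getLast_ofFn_succ v), ?_, ?_⟩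
  · rw [Walk.isPath_def, Walk.support_copy, Walk.support_ofSupport]
    exact List.nodup_ofFn.2 hv
  · simp

theorem hasCycleLength_sup_edge {V : Type*} {G : SimpleGraph V} {x y : V} (hxy : x ≠ y)
    (hnadj : ¬G.Adj x y) {p : G.Walk y x} (hp : p.IsPath) :
    HasCycleLength (G ⊔ fromEdgeSet {s(x, y)}) (p.length + 1) := by
  have hadj : (G ⊔ fromEdgeSet {s(x, y)}).Adj x y := Or.inr ⟨rfl, hxy⟩
  refine ⟨x, .cons hadj (p.mapLe le_sup_left), ?_, by simp⟩
  rw [Walk.cons_isCycle_iff, Walk.edges_mapLe_eq_edges]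
  exact ⟨(Walk.isPath_mapLe _).2 hp, fun he => hnadj (p.adj_of_mem_edges he)⟩

end SimpleGraph

section Cayley

variable {Γ : Type*} [AddCommGroup Γ] {S : Set Γ} {hsym : ∀ s ∈ S, -s ∈ S}

theorem cayley_adj (h0 : (0 : Γ) ∉ S) {x y : Γ} : (cayley S hsym).Adj x y ↔ x - y ∈ S :=
  ⟨And.right, fun h => ⟨fun hxy => h0 (by rwa [hxy, sub_self] at h), h⟩⟩

theorem neighborSet_cayley (h0 : (0 : Γ) ∉ S) (v : Γ) :
    (cayley S hsym).neighborSet v = (v - ·) '' S := by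
  ext w
  simp only [SimpleGraph.mem_neighborSet, cayley_adj h0, Set.mem_image]
  exact ⟨fun h => ⟨v - w, h, sub_sub_cancel v w⟩, by rintro ⟨s, hs, rfl⟩; simpa using hs⟩

theorem ncard_neighborSet_cayley (h0 : (0 : Γ) ∉ S) (v : Γ) :
    ((cayley S hsym).neighborSet v).ncard = S.ncard := by
  rw [neighborSet_cayley h0, Set.ncard_image_of_injective _ sub_right_injective]

theorem zero_mem_sumset_zero : (0 : Γ) ∈ sumset 0 S :=
  ⟨Fin.elim0, fun i => i.elim0, by simp⟩

theorem add_mem_sumset_succ {m : ℕ} {a x : Γ} (ha : a ∈ S) (hx : x ∈ sumset m S) :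
    a + x ∈ sumset (m + 1) S := by
  obtain ⟨f, hfS, rfl⟩ := hx
  exact ⟨Fin.cons a f, Fin.cons ha hfS, Fin.sum_cons a f⟩

theorem sub_mem_sumset_length {u v : Γ} (w : (cayley S hsym).Walk u v) :
    u - v ∈ sumset w.length S := by
  induction w with
  | nil => simpa using zero_mem_sumset_zero
  | cons h _ ih => simpa using add_mem_sumset_succ h.2 ih

theorem exists_isPath_cayley_of_sub_mem_RSumset (h0 : (0 : Γ) ∉ S) {m : ℕ} {x y : Γ}
    (h : x - y ∈ RSumset m S) : ∃ p : (cayley S hsym).Walk y x, p.IsPath ∧ p.length = m := by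
  obtain ⟨f, hfS, hsum, hnz⟩ := h
  have hblock : ∀ a b, a ≤ b → ∑ k ∈ Finset.Icc a b, f k ≠ 0 := by
    intro a b hab
    rcases hab.eq_or_lt with rfl | hab
    · rw [Finset.Icc_self, Finset.sum_singleton]
      exact fun h => h0 (h ▸ hfS a)
    · exact hnz a b hab
  obtain ⟨p, hp, hlen⟩ := SimpleGraph.exists_isPath_of_injective (G := cayley S hsym)
    (fun k => y + Fin.partialSum f k) ((add_right_injective y).comp (Fin.partialSum_injective hblock))
    fun i => ((cayley S hsym).adj_comm _ _).2 <| (cayley_adj h0).2 <| by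
      simpa [Fin.partialSum_succ] using hfS i
  have hlast : y + Fin.partialSum f (Fin.last m) = x := by
    rw [Fin.partialSum, List.sum_take_ofFn]
    simp [hsum]
  exact ⟨p.copy (by simp) hlast, by simpa using hp, by simpa using hlen⟩

end Cayley

theorem stmt8_general (ℓ : ℕ)
    {Γ : Type*} [AddCommGroup Γ]
    (S : Set Γ) (hsym : ∀ s ∈ S, -s ∈ S) (h0 : (0 : Γ) ∉ S)
    (hR : RSumset ℓ S = Set.univ \ (S ∪ {0}))
    (h0sum : (0 : Γ) ∉ sumset (ℓ + 1) S) :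
    (∀ v, ((cayley S hsym).neighborSet v).ncard = S.ncard) ∧
    CycleSaturated (cayley S hsym) (ℓ + 1) := by
  refine ⟨ncard_neighborSet_cayley h0, ?_, fun x y hxy hnadj => ?_⟩
  · rintro ⟨v, w, -, hlen⟩
    exact h0sum (by simpa [hlen] using sub_mem_sumset_length w)
  · have hxyS : x - y ∉ S := fun h => hnadj ⟨hxy, h⟩
    have hR' : x - y ∈ RSumset ℓ S := by simp [hR, hxyS, sub_eq_zero, hxy]
    obtain ⟨p, hp, hlen⟩ := exists_isPath_cayley_of_sub_mem_RSumset h0 hR'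
    simpa [hlen] using SimpleGraph.hasCycleLength_sup_edge hxy hnadj hp

theorem stmt8 (ℓ n : ℕ) (hℓe : Even ℓ) (hℓ : 2 ≤ ℓ)
    {Γ : Type*} [AddCommGroup Γ] [Fintype Γ] (hcard : Fintype.card Γ = n)
    (S : Set Γ) (hsym : ∀ s ∈ S, -s ∈ S) (h0 : (0 : Γ) ∉ S)
    (hR : RSumset ℓ S = Set.univ \ (S ∪ {0}))
    (h0sum : (0 : Γ) ∉ sumset (ℓ + 1) S) :
    (∀ v, ((cayley S hsym).neighborSet v).ncard = S.ncard) ∧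
    CycleSaturated (cayley S hsym) (ℓ + 1) :=
  stmt8_general ℓ S hsym h0 hR h0sum
end

section
/- Let ℓ ≥ 1 and let S ⊆ ℤ_n be a complete (ℓ,1)-sum-free set. Then n ≤ C(|S|+ℓ−1, ℓ) + |S|, where C(a,b) denotes the binomial coefficient. -/
/-! Since `ℓS ∪ S` is the whole group, `n ≤ |ℓS| + |S|`. An element of `ℓS` is the sum of a
multiset of size `ℓ` drawn from `S`, and there are `C(|S| + ℓ - 1, ℓ)` such multisets. -/

section Sumset

variable {Γ : Type*} [AddCommMonoid Γ] {m : ℕ} {S : Set Γ}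

lemma Multiset.sum_mem_sumset {M : Multiset Γ} (hM : ∀ y ∈ M, y ∈ S) (hcard : M.card = m) :
    M.sum ∈ sumset m S := by
  have hlen : M.toList.length = m := by simp [hcard]
  refine ⟨fun i => M.toList.get (Fin.cast hlen.symm i), fun i => ?_, ?_⟩
  · exact hM _ (Multiset.mem_toList.mp (List.get_mem _ _))
  · rw [← Multiset.sum_toList, ← Fin.sum_univ_getElem]
    exact Fintype.sum_equiv (finCongr hlen.symm) _ _ fun _ => rfl

variable (m S) in
lemma sumset_eq_range_sym :
    sumset m S = Set.range fun s : Sym S m => ((s : Multiset S).map (↑)).sum := by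
  ext x
  constructor
  · rintro ⟨f, hf, rfl⟩
    refine ⟨⟨Finset.univ.val.map fun i => ⟨f i, hf i⟩, by simp⟩, ?_⟩
    simp only [Sym.coe_mk, Multiset.map_map]
    rfl
  · rintro ⟨s, rfl⟩
    refine Multiset.sum_mem_sumset (fun y hy => ?_) (by simp)
    obtain ⟨⟨z, hz⟩, -, rfl⟩ := Multiset.mem_map.mp hy
    exact hz

lemma ncard_sumset_le (hS : S.Finite) : (sumset m S).ncard ≤ (S.ncard + m - 1).choose m := by
  have := hS.to_subtype
  rw [sumset_eq_range_sym, ← Nat.card_coe_set_eq, ← Nat.card_coe_set_eq S,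
    ← Sym.natCard_sym_eq_choose]
  exact Finite.card_range_le _

end Sumset

theorem stmt11_general (ℓ n : ℕ) (S : Set (ZMod n))
    (hcov : sumset ℓ S ∪ S = Set.univ) :
    n ≤ Nat.choose (S.ncard + ℓ - 1) ℓ + S.ncard := by
  obtain rfl | hn := eq_or_ne n 0
  · exact Nat.zero_le _
  have : NeZero n := ⟨hn⟩
  calc n = (sumset ℓ S ∪ S).ncard := by rw [hcov, Set.ncard_univ, Nat.card_zmod]
    _ ≤ (sumset ℓ S).ncard + S.ncard := Set.ncard_union_le _ _
    _ ≤ Nat.choose (S.ncard + ℓ - 1) ℓ + S.ncard := by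
      gcongr
      exact ncard_sumset_le S.toFinite

theorem stmt11 (ℓ n : ℕ) (hℓ : 1 ≤ ℓ) (hn : 1 ≤ n) (S : Set (ZMod n))
    (hdisj : sumset ℓ S ∩ S = ∅) (hcov : sumset ℓ S ∪ S = Set.univ) :
    n ≤ Nat.choose (S.ncard + ℓ - 1) ℓ + S.ncard :=
  stmt11_general ℓ n S hcov
end

section
/- With ℓ, t, γ, j, k, r, n and S = S⁺ ∪ S⁻ ⊆ ℤ_n chosen as in the construction, R_ℓ(S) = ℤ_n \ (S ∪ {0}). -/
namespace St15

/-- the index set E -/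
def inE (t : ℕ) (M s : ℤ) : Prop :=
  s = 0 ∨ ((t:ℤ)+2 ≤ s ∧ s ≤ 2*(t:ℤ)+2) ∨ (2*(t:ℤ)+4 ≤ s ∧ s ≤ M)

lemma not_dvd_of {n : ℕ} {B : ℤ} (h0 : B ≠ 0) (h1 : |B| < (n:ℤ)) : ¬ (n:ℤ) ∣ B := by
  rintro ⟨c, rfl⟩
  rcases eq_or_ne c 0 with rfl | hc
  · simp at h0
  · have h2 : (1:ℤ) ≤ |c| := Int.one_le_abs hc
    have h3 : (0:ℤ) ≤ (n:ℤ) := by positivity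
    rw [abs_mul, abs_of_nonneg h3] at h1
    nlinarith

lemma cast_block_ne_zero {n : ℕ} {B : ℤ} (h0 : B ≠ 0) (h1 : |B| < (n:ℤ)) :
    ((B : ZMod n)) ≠ 0 := by
  intro h
  exact not_dvd_of h0 h1 ((ZMod.intCast_zmod_eq_zero_iff_dvd B n).mp h)

lemma sum_Icc_fin {n : ℕ} {l : ℕ} (F : ℕ → ℤ) (i j : Fin l) :
    ∑ a ∈ Finset.Icc i j, ((F a.1 : ℤ) : ZMod n) =
      ((∑ a ∈ Finset.Icc i.1 j.1, F a : ℤ) : ZMod n) := by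
  have h : Finset.Icc i.1 j.1 = (Finset.Icc i j).map Fin.valEmbedding := by
    rw [Fin.map_valEmbedding_Icc]
  rw [h, Finset.sum_map]
  push_cast
  rfl

lemma walk_mem_RSumset {n : ℕ} {l : ℕ} {S : Set (ZMod n)} (F : ℕ → ℤ) {y : ℤ}
    (hmem : ∀ i < l, ((F i : ℤ) : ZMod n) ∈ S)
    (hsum : ∑ i ∈ Finset.range l, F i = y)
    (hblock : ∀ i j : ℕ, i < j → j < l → ¬ ((n:ℤ) ∣ ∑ a ∈ Finset.Icc i j, F a)) :
    ((y : ZMod n)) ∈ RSumset l S := by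
  refine ⟨fun i => ((F i.1 : ℤ) : ZMod n), fun i => hmem i.1 i.2, ?_, ?_⟩
  · rw [Fin.sum_univ_eq_sum_range (fun i => ((F i : ℤ) : ZMod n)) l, ← hsum]
    push_cast
    rfl
  · intro i j hij
    rw [sum_Icc_fin]
    intro h0
    exact hblock i.1 j.1 hij j.2 ((ZMod.intCast_zmod_eq_zero_iff_dvd _ n).mp h0)


lemma mem_Splus_iff {n t k : ℕ} {γ : ℤ} (x : ZMod n) :
    x ∈ Splus n t k γ ↔ ∃ s : ℤ, inE t ((k:ℤ)+γ) s ∧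
      x = ((2*(k:ℤ)+2*γ+1 - 2*s : ℤ) : ZMod n) := by
  constructor
  · rintro ((⟨θ, h0, h1, rfl⟩ | ⟨θ, h0, h1, rfl⟩) | h)
    · exact ⟨(k:ℤ)+γ-θ, Or.inr (Or.inr ⟨by omega, by omega⟩), by congr 1; ring⟩
    · exact ⟨2*(t:ℤ)+4-θ, Or.inr (Or.inl ⟨by omega, by omega⟩), by congr 1; ring⟩
    · refine ⟨0, Or.inl rfl, ?_⟩
      rw [Set.mem_singleton_iff] at h
      rw [h]; congr 1; ring
  · rintro ⟨s, (rfl | ⟨h0, h1⟩ | ⟨h0, h1⟩), rfl⟩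
    · exact Or.inr (by rw [Set.mem_singleton_iff]; congr 1; ring)
    · exact Or.inl (Or.inr ⟨2*(t:ℤ)+4-s, by omega, by omega, by congr 1; ring⟩)
    · exact Or.inl (Or.inl ⟨(k:ℤ)+γ-s, by omega, by omega, by congr 1; ring⟩)

lemma mem_Sminus_iff {n t k : ℕ} {γ : ℤ} (x : ZMod n) :
    x ∈ Sminus n t k γ ↔ ∃ s : ℤ, inE t ((k:ℤ)+γ) s ∧
      x = ((-(2*(k:ℤ)+2*γ+1 - 2*s) : ℤ) : ZMod n) := by
  constructor
  · rintro ⟨y, hy, rfl⟩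
    obtain ⟨s, hs, rfl⟩ := (mem_Splus_iff y).mp hy
    exact ⟨s, hs, by push_cast; ring⟩
  · rintro ⟨s, hs, rfl⟩
    refine ⟨((2*(k:ℤ)+2*γ+1 - 2*s : ℤ) : ZMod n), (mem_Splus_iff _).mpr ⟨s, hs, rfl⟩, ?_⟩
    push_cast; ring

lemma mem_S_iff {n t k : ℕ} {γ : ℤ} (x : ZMod n) :
    x ∈ Splus n t k γ ∪ Sminus n t k γ ↔ ∃ ε s : ℤ, (ε = 1 ∨ ε = -1) ∧ inE t ((k:ℤ)+γ) s ∧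
      x = ((ε * (2*(k:ℤ)+2*γ+1 - 2*s) : ℤ) : ZMod n) := by
  constructor
  · rintro (h | h)
    · obtain ⟨s, hs, rfl⟩ := (mem_Splus_iff x).mp h
      exact ⟨1, s, Or.inl rfl, hs, by congr 1; ring⟩
    · obtain ⟨s, hs, rfl⟩ := (mem_Sminus_iff x).mp h
      exact ⟨-1, s, Or.inr rfl, hs, by congr 1; ring⟩
  · rintro ⟨ε, s, (rfl | rfl), hs, rfl⟩
    · exact Or.inl ((mem_Splus_iff _).mpr ⟨s, hs, by congr 1; ring⟩)
    · exact Or.inr ((mem_Sminus_iff _).mpr ⟨s, hs, by congr 1; ring⟩)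

lemma S_neg_mem {n t k : ℕ} {γ : ℤ} {x : ZMod n}
    (h : x ∈ Splus n t k γ ∪ Sminus n t k γ) :
    -x ∈ Splus n t k γ ∪ Sminus n t k γ := by
  obtain ⟨ε, s, hε, hs, rfl⟩ := (mem_S_iff x).mp h
  refine (mem_S_iff _).mpr ⟨-ε, s, ?_, hs, by push_cast; ring⟩
  rcases hε with rfl | rfl
  · exact Or.inr rfl
  · exact Or.inl (by ring)

lemma RSumset_neg {n l : ℕ} {S : Set (ZMod n)} (hS : ∀ z ∈ S, -z ∈ S) {x : ZMod n}
    (h : x ∈ RSumset l S) : -x ∈ RSumset l S := by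
  obtain ⟨f, hf, hsum, hblock⟩ := h
  refine ⟨fun i => -f i, fun i => hS _ (hf i), by rw [← hsum]; simp, ?_⟩
  · intro i j hij h0
    apply hblock i j hij
    have : ∑ a ∈ Finset.Icc i j, f a = -∑ a ∈ Finset.Icc i j, (fun i => -f i) a := by
      simp
    rw [this, h0, neg_zero]
lemma arith_c (l t M d d' T s n c : ℤ) (hl : 4 ≤ l) (ht : 0 ≤ t)
    (hM : 4*t + 2*l + 2 ≤ M)
    (hn : n = (l+1)*(2*M+1) - (4*t+6))
    (hdub : d ≤ l) (hdlb : -l ≤ d) (hd2 : d = 2*d')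
    (hT1 : 2*T ≤ (l+d)*M) (hT2 : -((l-d)*M) ≤ 2*T)
    (hs0 : 0 ≤ s) (hsM : s ≤ M)
    (hc : d*(2*M+1) - 2*T - (2*M+1 - 2*s) = n*c) : c = 1 ∨ c = -1 := by
  have hM0 : (0:ℤ) ≤ M := by linarith
  have hn0 : (0:ℤ) ≤ n := by nlinarith
  have hcub : c ≤ 1 := by
    by_contra hcc
    push_neg at hcc
    have h2c : (2:ℤ) ≤ c := by omega
    have h := mul_le_mul_of_nonneg_left h2c hn0
    nlinarith [mul_nonneg (show (0:ℤ) ≤ l - d by omega) hM0,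
      mul_nonneg (show (0:ℤ) ≤ l + d by omega) hM0]
  have hclb : -1 ≤ c := by
    by_contra hcc
    push_neg at hcc
    have h2c : c ≤ (-2:ℤ) := by omega
    have h := mul_le_mul_of_nonneg_left h2c hn0
    nlinarith [mul_nonneg (show (0:ℤ) ≤ l - d by omega) hM0,
      mul_nonneg (show (0:ℤ) ≤ l + d by omega) hM0]
  have hc0 : c ≠ 0 := by
    rintro rfl
    rw [mul_zero] at hc
    have hc2 : 2*(d'*(2*M+1)) - 2*T - (2*M+1 - 2*s) = 0 := by
      linear_combination hc - (2*M+1)*hd2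
    generalize d'*(2*M+1) = w at hc2
    omega
  omega

lemma arith_cpos (l t M d T s n : ℤ) (hl : 4 ≤ l) (ht : 0 ≤ t)
    (hM : 4*t + 2*l + 2 ≤ M)
    (hn : n = (l+1)*(2*M+1) - (4*t+6))
    (hdub : d ≤ l)
    (hT2 : -((l-d)*M) ≤ 2*T)
    (hs0 : 0 ≤ s) (hsM : s ≤ M)
    (hc : d*(2*M+1) - 2*T - (2*M+1 - 2*s) = n*1) : False := by
  have hM0 : (0:ℤ) ≤ M := by linarith
  nlinarith [mul_nonneg (show (0:ℤ) ≤ l - d by omega) hM0]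

lemma arith_cneg (l t M d T s n : ℤ) (hl : 4 ≤ l) (ht : 0 ≤ t)
    (hM : 4*t + 2*l + 2 ≤ M)
    (hn : n = (l+1)*(2*M+1) - (4*t+6))
    (hdlb : -l ≤ d)
    (hT1 : 2*T ≤ (l+d)*M)
    (hs0 : 0 ≤ s) (hsM : s ≤ M)
    (hc : d*(2*M+1) - 2*T - (2*M+1 - 2*s) = n*(-1)) :
    d = -l ∧ 2*T = 2*s - 4*t - 6 := by
  have hM0 : (0:ℤ) ≤ M := by linarith
  have hp0 : d = -l := by
    by_contra hne
    have h1d : 1 ≤ d + l := by omega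
    have hps : M ≤ (d + l)*M := by nlinarith
    nlinarith
  refine ⟨hp0, by linear_combination -hc + hn + (2*M+1)*hp0⟩

lemma sumE_mem_C {l t : ℕ} {M : ℤ} (u : Fin l → ℤ) (hu : ∀ i, inE t M (u i)) :
    (∑ i, u i) = 0 ∨ ((t:ℤ)+2 ≤ ∑ i, u i ∧ ∑ i, u i ≤ 2*(t:ℤ)+2) ∨ 2*(t:ℤ)+4 ≤ ∑ i, u i := by
  classical
  refine Finset.sum_induction u
    (fun z => z = 0 ∨ ((t:ℤ)+2 ≤ z ∧ z ≤ 2*(t:ℤ)+2) ∨ 2*(t:ℤ)+4 ≤ z) ?_ (Or.inl rfl) ?_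
  · rintro a b (rfl | ha | ha) hb
    · simpa using hb
    · rcases hb with rfl | hb | hb
      · simp [ha]
      · right; right; omega
      · right; right; omega
    · rcases hb with rfl | hb | hb
      · simp; omega
      · right; right; omega
      · right; right; omega
  · intro i _
    rcases hu i with h | h | h
    · exact Or.inl h
    · exact Or.inr (Or.inl h)
    · right; right; omega

lemma sum_notMem_Splus {l t k n : ℕ} {γ : ℤ}
    (hle : Even l) (hl : 4 ≤ l)
    (hM : 4*(t:ℤ) + 2*(l:ℤ) + 2 ≤ (k:ℤ) + γ)
    (hn : (n:ℤ) = ((l:ℤ)+1) * (2*((k:ℤ)+γ)+1) - (4*(t:ℤ)+6))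
    (ε u : Fin l → ℤ)
    (hε : ∀ i, ε i = 1 ∨ ε i = -1)
    (hu : ∀ i, inE t ((k:ℤ)+γ) (u i)) :
    ((∑ i, ε i * (2*((k:ℤ)+γ)+1 - 2 * u i) : ℤ) : ZMod n) ∉ Splus n t k γ := by
  intro hmem
  set M : ℤ := (k:ℤ) + γ with hMdef
  clear_value M
  obtain ⟨s, hsE, hxs⟩ := (mem_Splus_iff _).mp hmem
  have hMbig : 2*(t:ℤ) + 4 ≤ M := by rw [hMdef]; omega
  have hs0 : 0 ≤ s ∧ s ≤ M := by
    rcases hsE with rfl | ⟨a, b⟩ | ⟨a, b⟩ <;> constructor <;> omega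
  have hu0 : ∀ i, 0 ≤ u i ∧ u i ≤ M := fun i => by
    rcases hu i with h | ⟨a, b⟩ | ⟨a, b⟩ <;> constructor <;> omega
  set d : ℤ := ∑ i, ε i with hd
  set T : ℤ := ∑ i, ε i * u i with hT
  clear_value d T
  have hX : (∑ i, ε i * (2*M+1 - 2 * u i)) = d*(2*M+1) - 2*T := by
    rw [hd, hT, Finset.sum_mul, Finset.mul_sum, ← Finset.sum_sub_distrib]
    exact Finset.sum_congr rfl fun i _ => by ring
  have h1 : ((d*(2*M+1) - 2*T : ℤ) : ZMod n) = ((2*M+1 - 2*s : ℤ) : ZMod n) := by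
    rw [← hX, hxs]
    congr 1
    rw [hMdef]; ring
  have hdvd : (n:ℤ) ∣ (d*(2*M+1) - 2*T) - (2*M+1 - 2*s) := by
    rw [← ZMod.intCast_zmod_eq_zero_iff_dvd, Int.cast_sub, h1, sub_self]
  obtain ⟨c, hc⟩ := hdvd
  -- bounds on d
  have hdub : d ≤ (l:ℤ) := by
    rw [hd]
    calc ∑ i : Fin l, ε i ≤ ∑ _i : Fin l, (1:ℤ) :=
          Finset.sum_le_sum (fun i _ => by rcases hε i with h | h <;> omega)
      _ = (l:ℤ) := by simp
  have hdlb : -(l:ℤ) ≤ d := by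
    rw [hd]
    calc -(l:ℤ) = ∑ _i : Fin l, (-1:ℤ) := by simp
      _ ≤ ∑ i : Fin l, ε i :=
          Finset.sum_le_sum (fun i _ => by rcases hε i with h | h <;> omega)
  obtain ⟨l2, hl2⟩ : ∃ l2 : ℤ, (l:ℤ) = 2*l2 := by
    obtain ⟨r, hr⟩ := hle; exact ⟨(r:ℤ), by rw [hr]; push_cast; ring⟩
  have hdpar : d % 2 = 0 := by
    have h1 : d % 2 = (∑ i : Fin l, ε i % 2) % 2 := by rw [hd]; exact Finset.sum_int_mod _ 2 _
    have h2 : (∑ i : Fin l, ε i % 2) = (l:ℤ) := by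
      rw [Finset.sum_congr rfl (fun i _ => show ε i % 2 = 1 by rcases hε i with h | h <;> simp [h])]
      simp
    rw [h1, h2]
    omega
  obtain ⟨d', hd'⟩ : ∃ d', d = 2*d' := ⟨d/2, by omega⟩
  -- bounds on T
  have hT1 : 2*T ≤ ((l:ℤ) + d)*M := by
    have hpt : ∀ i : Fin l, 2*(ε i * u i) ≤ (1 + ε i)*M := fun i => by
      rcases hε i with h | h <;> rw [h] <;> nlinarith [(hu0 i).1, (hu0 i).2]
    have hsplit : (∑ i : Fin l, (1 + ε i)) = (l:ℤ) + d := by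
      rw [Finset.sum_add_distrib, ← hd]; simp
    calc 2*T = ∑ i : Fin l, 2*(ε i * u i) := by rw [hT, Finset.mul_sum]
      _ ≤ ∑ i : Fin l, (1 + ε i)*M := Finset.sum_le_sum (fun i _ => hpt i)
      _ = ((l:ℤ) + d)*M := by rw [← Finset.sum_mul, hsplit]
  have hT2 : -(((l:ℤ) - d)*M) ≤ 2*T := by
    have hpt : ∀ i : Fin l, -((1 - ε i)*M) ≤ 2*(ε i * u i) := fun i => by
      rcases hε i with h | h <;> rw [h] <;> nlinarith [(hu0 i).1, (hu0 i).2]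
    have hsplit : (∑ i : Fin l, (1 - ε i)) = (l:ℤ) - d := by
      rw [Finset.sum_sub_distrib, ← hd]; simp
    have hstep : (∑ i : Fin l, -((1 - ε i)*M)) = -(((l:ℤ) - d)*M) := by
      rw [Finset.sum_neg_distrib, ← Finset.sum_mul, hsplit]
    calc -(((l:ℤ) - d)*M) = ∑ i : Fin l, -((1 - ε i)*M) := hstep.symm
      _ ≤ ∑ i : Fin l, 2*(ε i * u i) := Finset.sum_le_sum (fun i _ => hpt i)
      _ = 2*T := by rw [hT, Finset.mul_sum]
  have hc1 : c = 1 ∨ c = -1 :=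
    arith_c (l:ℤ) (t:ℤ) M d d' T s (n:ℤ) c (by omega) (by positivity) hM hn hdub hdlb hd' hT1 hT2
      hs0.1 hs0.2 (by linarith [hc])
  rcases hc1 with rfl | rfl
  · exact arith_cpos (l:ℤ) (t:ℤ) M d T s (n:ℤ) (by omega) (by positivity) hM hn hdub hT2
      hs0.1 hs0.2 (by linarith [hc])
  · obtain ⟨hp0, h2T⟩ := arith_cneg (l:ℤ) (t:ℤ) M d T s (n:ℤ) (by omega) (by positivity) hM hn
      hdlb hT1 hs0.1 hs0.2 (by linarith [hc])
    have hsum0 : (∑ i : Fin l, (1 + ε i)) = 0 := by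
      rw [Finset.sum_add_distrib, ← hd]
      simp [hp0]
    have hε1 : ∀ i : Fin l, ε i = -1 := by
      intro i
      have h := (Finset.sum_eq_zero_iff_of_nonneg
        (fun j _ => by rcases hε j with h | h <;> omega)).mp hsum0 i (Finset.mem_univ i)
      omega
    have hTU : T = -∑ i, u i := by
      rw [hT, ← Finset.sum_neg_distrib]
      exact Finset.sum_congr rfl fun i _ => by rw [hε1 i]; ring
    have hU : (∑ i, u i) = 2*(t:ℤ) + 3 - s := by
      rw [hTU] at h2T
      omega
    have hC := sumE_mem_C u hu
    rw [hU] at hC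
    rcases hsE with rfl | ⟨a, b⟩ | ⟨a, b⟩ <;> rcases hC with h | ⟨h1, h2⟩ | h <;> omega

lemma A_mem_Splus {n t k : ℕ} {γ : ℤ} :
    (((2*((k:ℤ)+γ)+1 : ℤ)) : ZMod n) ∈ Splus n t k γ :=
  (mem_Splus_iff _).mpr ⟨0, Or.inl rfl, by congr 1; ring⟩

lemma mid_mem_Splus {n t k : ℕ} {γ : ℤ} (v : ℤ) (h1 : (t:ℤ)+2 ≤ v) (h2 : v ≤ 2*(t:ℤ)+2) :
    (((2*((k:ℤ)+γ)+1 - 2*v : ℤ)) : ZMod n) ∈ Splus n t k γ :=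
  (mem_Splus_iff _).mpr ⟨v, Or.inr (Or.inl ⟨h1, h2⟩), by congr 1; ring⟩

lemma odd_mem_Splus {n t k : ℕ} {γ : ℤ} (o : ℤ) (ho : o % 2 = 1) (h1 : 1 ≤ o)
    (h2 : o ≤ 2*((k:ℤ)+γ)+1 - 4*(t:ℤ) - 8) :
    ((o : ℤ) : ZMod n) ∈ Splus n t k γ := by
  refine (mem_Splus_iff _).mpr ⟨((k:ℤ)+γ) - (o-1)/2, Or.inr (Or.inr ⟨by omega, by omega⟩), ?_⟩
  congr 1
  omega

lemma odd_decomp (O : ℤ) (hO : O % 2 = 1) (hO1 : 1 ≤ O) :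
    ∀ (m : ℕ) (ρ : ℤ), (m:ℤ) ≤ ρ → ρ ≤ (m:ℤ)*O → (ρ - (m:ℤ)) % 2 = 0 →
    ∃ F : ℕ → ℤ, (∀ i < m, F i % 2 = 1 ∧ 1 ≤ F i ∧ F i ≤ O) ∧
      ∑ i ∈ Finset.range m, F i = ρ := by
  intro m
  induction m with
  | zero =>
    intro ρ h1 h2 _
    refine ⟨fun _ => 0, by omega, ?_⟩
    simp only [Nat.cast_zero] at h1 h2
    simp
    omega
  | succ m ih =>
    intro ρ h1 h2 h3
    push_cast at h1 h2 h3
    have hm0 : (0:ℤ) ≤ (m:ℤ) := by positivity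
    have hmO : (m:ℤ) ≤ (m:ℤ)*O := le_mul_of_one_le_right hm0 hO1
    obtain ⟨o, ho1, ho2, ho3, hc1, hc2, hc3⟩ :
        ∃ o : ℤ, o % 2 = 1 ∧ 1 ≤ o ∧ o ≤ O ∧ (m:ℤ) ≤ ρ - o ∧ ρ - o ≤ (m:ℤ)*O ∧
          (ρ - o - (m:ℤ)) % 2 = 0 := by
      by_cases hcase : ρ - m ≤ O
      · exact ⟨ρ - m, by omega, by omega, hcase, by omega, by omega, by omega⟩
      · exact ⟨O, hO, by omega, le_refl O, by omega, by nlinarith [h2, hmO, hO1], by omega⟩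
    obtain ⟨F, hF, hsum⟩ := ih (ρ - o) hc1 hc2 hc3
    refine ⟨fun i => if i = 0 then o else F (i - 1), ?_, ?_⟩
    · intro i hi
      rcases Nat.eq_zero_or_pos i with rfl | hip
      · simpa using ⟨ho1, ho2, ho3⟩
      · have : ¬ (i = 0) := by omega
        simpa [this] using hF (i - 1) (by omega)
    · rw [Finset.sum_range_succ']
      have e1 : ∀ i, (if i + 1 = 0 then o else F (i + 1 - 1)) = F i := fun i => by simp
      rw [Finset.sum_congr rfl (fun i _ => e1 i), hsum]
      simp

lemma pos_walk {n l : ℕ} {S : Set (ZMod n)} {A y : ℤ} (F : ℕ → ℤ)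
    (hlA : (l:ℤ)*A < (n:ℤ))
    (hF : ∀ i < l, 1 ≤ F i ∧ F i ≤ A ∧ ((F i : ℤ) : ZMod n) ∈ S)
    (hsum : ∑ i ∈ Finset.range l, F i = y) :
    ((y : ℤ) : ZMod n) ∈ RSumset l S := by
  apply walk_mem_RSumset F (fun i hi => (hF i hi).2.2) hsum
  intro i j hij hjl
  have hA1 : (1:ℤ) ≤ A := le_trans (hF i (by omega)).1 (hF i (by omega)).2.1
  have hcard : (Finset.Icc i j).card = j + 1 - i := Nat.card_Icc i j
  have hlb : ((Finset.Icc i j).card : ℤ) * 1 ≤ ∑ a ∈ Finset.Icc i j, F a := by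
    have := Finset.card_nsmul_le_sum (Finset.Icc i j) F 1
      (fun a ha => (hF a (by have := (Finset.mem_Icc.mp ha).2; omega)).1)
    simpa [nsmul_eq_mul] using this
  have hub : (∑ a ∈ Finset.Icc i j, F a) ≤ ((Finset.Icc i j).card : ℤ) * A := by
    have := Finset.sum_le_card_nsmul (Finset.Icc i j) F A
      (fun a ha => (hF a (by have := (Finset.mem_Icc.mp ha).2; omega)).2.1)
    simpa [nsmul_eq_mul] using this
  have hcl : ((Finset.Icc i j).card : ℤ) ≤ (l:ℤ) := by
    rw [hcard]; push_cast; omega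
  have hc1 : (1:ℤ) ≤ ((Finset.Icc i j).card : ℤ) := by
    rw [hcard]; push_cast; omega
  have hcA : ((Finset.Icc i j).card : ℤ) * A ≤ (l:ℤ)*A :=
    mul_le_mul_of_nonneg_right hcl (by omega)
  apply not_dvd_of (by nlinarith) (by rw [abs_of_pos (by nlinarith)]; nlinarith)

-- walk consisting of (l-1) copies of A followed by a final step z
lemma walk_top {l t k n : ℕ} {γ : ℤ} (A : ℤ) (hA : A = 2*((k:ℤ)+γ)+1) (hl : 4 ≤ l)
    (hn : (n:ℤ) = ((l:ℤ)+1)*A - (4*(t:ℤ)+6))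
    (hM : 4*(t:ℤ) + 2*(l:ℤ) + 2 ≤ (k:ℤ)+γ)
    (z : ℤ) (hz1 : 1 ≤ z) (hz2 : z ≤ A)
    (hzS : ((z : ℤ) : ZMod n) ∈ Splus n t k γ ∪ Sminus n t k γ)
    (y : ℤ) (hy : y = ((l:ℤ)-1)*A + z) :
    ((y : ℤ) : ZMod n) ∈ RSumset l (Splus n t k γ ∪ Sminus n t k γ) := by
  have ht0 : (0:ℤ) ≤ (t:ℤ) := by positivity
  have h2 : 8*(t:ℤ) + 4*(l:ℤ) + 5 ≤ A := by rw [hA]; omega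
  have hlA : (l:ℤ)*A < (n:ℤ) := by
    have h1 : (n:ℤ) = (l:ℤ)*A + A - 4*(t:ℤ) - 6 := by rw [hn]; ring
    have hll : (4:ℤ) ≤ (l:ℤ) := by exact_mod_cast hl
    linarith
  refine pos_walk (fun i => if i = l - 1 then z else A) hlA ?_ ?_
  · intro i _
    beta_reduce
    split_ifs with hc
    · exact ⟨hz1, hz2, hzS⟩
    · exact ⟨by omega, le_refl A, Or.inl (by rw [hA]; exact A_mem_Splus)⟩
  · have hsplit : (∑ i ∈ Finset.range l, (if i = l - 1 then z else A))
        = (∑ i ∈ Finset.range (l-1), (if i = l - 1 then z else A)) + z := by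
      have h := Finset.sum_range_succ (fun i => if i = l - 1 then z else A) (l-1)
      rw [show l - 1 + 1 = l from by omega] at h
      simpa using h
    have e1 : ∀ i ∈ Finset.range (l-1), (if i = l - 1 then z else A) = A := by
      intro i hi
      rw [if_neg (by have := Finset.mem_range.mp hi; omega)]
    rw [hsplit, Finset.sum_congr rfl e1, Finset.sum_const]
    simp only [Finset.card_range, nsmul_eq_mul]
    rw [hy]
    push_cast [Nat.cast_sub (by omega : 1 ≤ l)]
    ring

lemma pos_main {l t k n : ℕ} {γ : ℤ} (hle : Even l) (hl : 4 ≤ l)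
    (hM : 4*(t:ℤ) + 2*(l:ℤ) + 2 ≤ (k:ℤ)+γ)
    (hn : (n:ℤ) = ((l:ℤ)+1)*(2*((k:ℤ)+γ)+1) - (4*(t:ℤ)+6))
    (y : ℤ) (hyl0 : (l:ℤ) ≤ y) (hyl : y ≤ (l:ℤ)*(2*((k:ℤ)+γ)+1)) (hye : y % 2 = 0)
    (hxS : ((y:ℤ):ZMod n) ∉ Splus n t k γ ∪ Sminus n t k γ) :
    ((y:ℤ):ZMod n) ∈ RSumset l (Splus n t k γ ∪ Sminus n t k γ) := by
  set A : ℤ := 2*((k:ℤ)+γ)+1 with hA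
  clear_value A
  have ht0 : (0:ℤ) ≤ (t:ℤ) := by positivity
  have hll : (4:ℤ) ≤ (l:ℤ) := by exact_mod_cast hl
  set O : ℤ := A - 4*(t:ℤ) - 8 with hO
  clear_value O
  have hAodd : A % 2 = 1 := by rw [hA]; omega
  have hAbig : 8*(t:ℤ) + 4*(l:ℤ) + 5 ≤ A := by rw [hA]; omega
  have hOodd : O % 2 = 1 := by omega
  have hO1 : (1:ℤ) ≤ O := by omega
  have hlA : (l:ℤ)*A < (n:ℤ) := by
    have h1 : (n:ℤ) = (l:ℤ)*A + A - 4*(t:ℤ) - 6 := by rw [hn]; ring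
    linarith
  obtain ⟨l2, hl2⟩ : ∃ l2 : ℤ, (l:ℤ) = 2*l2 := by
    obtain ⟨r, hr⟩ := hle; exact ⟨(r:ℤ), by rw [hr]; push_cast; ring⟩
  by_cases htop : ((l:ℤ)-1)*A + O < y
  · -- top region
    obtain ⟨w, hw⟩ : ∃ w, (l:ℤ)*A = 2*w := ⟨l2*A, by rw [hl2]; ring⟩
    have e3 : ((l:ℤ)-1)*A + O = 2*w - 4*(t:ℤ) - 8 := by linear_combination hw + hO
    by_cases hytop : y = (l:ℤ)*A
    · exact walk_top A hA hl hn hM A (by omega) (le_refl A)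
        (Or.inl (by rw [hA]; exact A_mem_Splus)) y (by rw [hytop]; ring)
    · rw [hw] at hyl hytop
      rw [e3] at htop
      obtain ⟨v, hyv, hv1, hv2⟩ :
          ∃ v : ℤ, y = 2*w - 2*v ∧ 1 ≤ v ∧ v ≤ 2*(t:ℤ)+3 := ⟨w - y/2, by omega, by omega, by omega⟩
      by_cases hvmid : (t:ℤ)+2 ≤ v ∧ v ≤ 2*(t:ℤ)+2
      · refine walk_top A hA hl hn hM (A - 2*v) (by omega) (by omega)
          (Or.inl (by rw [hA]; exact mid_mem_Splus v hvmid.1 hvmid.2)) y ?_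
        rw [hyv]
        linear_combination -hw
      · -- y is in S⁻ : contradiction
        exfalso
        apply hxS
        right
        have hu1 : inE t ((k:ℤ)+γ) (2*(t:ℤ)+3-v) := by
          rcases eq_or_ne v (2*(t:ℤ)+3) with rfl | hne
          · exact Or.inl (by ring)
          · exact Or.inr (Or.inl ⟨by omega, by omega⟩)
        refine (mem_Sminus_iff _).mpr ⟨2*(t:ℤ)+3-v, hu1, ?_⟩
        have hyn : y = (n:ℤ)*1 + (-(2*(k:ℤ)+2*γ+1 - 2*(2*(t:ℤ)+3-v))) := by
          rw [hyv, hn]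
          linear_combination -hw - hA
        rw [hyn]
        push_cast
        simp
  · -- main region : y ≤ (l-1)*A + O
    push_neg at htop
    have hA1 : (0:ℤ) < A - 1 := by omega
    obtain ⟨q, r, hdiv, hr0, hrlt, hq0⟩ :
        ∃ q r : ℤ, r + (A-1)*q = y - (l:ℤ) ∧ 0 ≤ r ∧ r < A - 1 ∧ 0 ≤ q :=
      ⟨(y - (l:ℤ))/(A-1), (y - (l:ℤ)) % (A-1), Int.emod_add_mul_ediv _ _,
        Int.emod_nonneg _ (by omega), Int.emod_lt_of_pos _ hA1,
        Int.ediv_nonneg (by omega) (by omega)⟩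
    by_cases hbig : (l:ℤ) - 1 ≤ q
    · -- single final odd element ρ = y - (l-1)*A
      obtain ⟨ρ, hyρ, hρ1, hρ2, hρ3⟩ :
          ∃ ρ, y = ((l:ℤ)-1)*A + ρ ∧ 1 ≤ ρ ∧ ρ ≤ O ∧ ρ % 2 = 1 := by
        refine ⟨y - ((l:ℤ)-1)*A, by ring, ?_, by linarith, ?_⟩
        · have h1 : (A-1)*((l:ℤ)-1) ≤ (A-1)*q := mul_le_mul_of_nonneg_left hbig (by omega)
          nlinarith [hdiv, hr0]
        · obtain ⟨w2, hw2⟩ : ∃ w2, ((l:ℤ)-1)*A = 2*w2 - A := ⟨l2*A, by rw [hl2]; ring⟩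
          omega
      exact walk_top A hA hl hn hM ρ hρ1 (by omega)
        (Or.inl (odd_mem_Splus ρ hρ3 hρ1 (by omega))) y hyρ
    · -- 0 ≤ q ≤ l - 2
      push_neg at hbig
      obtain ⟨g, hgq⟩ : ∃ g : ℕ, (g:ℤ) = q := ⟨q.toNat, Int.toNat_of_nonneg hq0⟩
      obtain ⟨m, hmdef⟩ : ∃ m : ℕ, m = l - g := ⟨_, rfl⟩
      have hmz : (m:ℤ) = (l:ℤ) - q := by rw [hmdef]; push_cast; omega
      have hm2 : (2:ℤ) ≤ (m:ℤ) := by omega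
      obtain ⟨ρ, hρdef⟩ : ∃ ρ : ℤ, ρ = y - q*A := ⟨_, rfl⟩
      have h1 : ρ = (l:ℤ) - q + r := by linear_combination hρdef - hdiv
      have hρm : (m:ℤ) ≤ ρ := by omega
      have hO2 : A + (l:ℤ) ≤ 2*O := by omega
      have hρub : ρ ≤ (m:ℤ)*O := by
        have h3 : ((m:ℤ) - 2)*(O - 1) ≥ 0 := mul_nonneg (by omega) (by omega)
        nlinarith [h1, hrlt, hmz]
      have hρpar : (ρ - (m:ℤ)) % 2 = 0 := by
        have hrm : ρ - (m:ℤ) = r := by linear_combination h1 - hmz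
        obtain ⟨A2, hA2⟩ : ∃ A2, A - 1 = 2*A2 := ⟨(A-1)/2, by omega⟩
        obtain ⟨w, hwdef⟩ : ∃ w, w = A2*q := ⟨_, rfl⟩
        have hwr : r = y - (l:ℤ) - 2*w := by
          rw [hwdef]
          linear_combination hdiv - q*hA2
        rw [hrm, hwr]
        omega
      obtain ⟨F1, hF1, hsum1⟩ := odd_decomp O hOodd hO1 m ρ hρm hρub hρpar
      apply pos_walk (fun i => if i < g then A else F1 (i - g)) hlA
      · intro i _
        beta_reduce
        split_ifs with hc
        · exact ⟨by omega, le_refl A, Or.inl (by rw [hA]; exact A_mem_Splus)⟩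
        · have hig : i - g < m := by omega
          obtain ⟨e1, e2, e3⟩ := hF1 (i - g) hig
          exact ⟨e2, by omega, Or.inl (odd_mem_Splus _ e1 e2 (by omega))⟩
      · rw [Finset.range_eq_Ico, ← Finset.sum_Ico_consecutive _ (Nat.zero_le g) (by omega : g ≤ l)]
        have e1 : ∀ i ∈ Finset.Ico 0 g, (if i < g then A else F1 (i - g)) = A := by
          intro i hi
          rw [if_pos (Finset.mem_Ico.mp hi).2]
        have e2 : (∑ i ∈ Finset.Ico g l, (if i < g then A else F1 (i - g)))
            = ∑ i ∈ Finset.range m, F1 i := by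
          rw [Finset.sum_Ico_eq_sum_range]
          refine Finset.sum_congr (by rw [hmdef]) ?_
          intro i _
          rw [if_neg (by omega), Nat.add_sub_cancel_left]
        rw [Finset.sum_congr rfl e1, e2, hsum1, Finset.sum_const]
        simp only [Nat.card_Ico, Nat.sub_zero, nsmul_eq_mul]
        rw [hgq, hρdef]
        ring

lemma small_main {l t k n : ℕ} {γ : ℤ} (hle : Even l) (hl : 4 ≤ l)
    (hM : 4*(t:ℤ) + 2*(l:ℤ) + 2 ≤ (k:ℤ)+γ)
    (hn : (n:ℤ) = ((l:ℤ)+1)*(2*((k:ℤ)+γ)+1) - (4*(t:ℤ)+6))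
    (y : ℤ) (hy2 : 2 ≤ y) (hyl : y ≤ (l:ℤ) - 2) (hye : y % 2 = 0) :
    ((y:ℤ):ZMod n) ∈ RSumset l (Splus n t k γ ∪ Sminus n t k γ) := by
  set A : ℤ := 2*((k:ℤ)+γ)+1 with hA
  clear_value A
  have ht0 : (0:ℤ) ≤ (t:ℤ) := by positivity
  have hll : (4:ℤ) ≤ (l:ℤ) := by exact_mod_cast hl
  have hAbig : 8*(t:ℤ) + 4*(l:ℤ) + 5 ≤ A := by rw [hA]; omega
  obtain ⟨l2, hl2⟩ : ∃ l2 : ℤ, (l:ℤ) = 2*l2 := by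
    obtain ⟨r, hr⟩ := hle; exact ⟨(r:ℤ), by rw [hr]; push_cast; ring⟩
  have hnl : 3*(l:ℤ) + 1 ≤ (n:ℤ) := by
    have h1 : (n:ℤ) = (l:ℤ)*A + A - 4*(t:ℤ) - 6 := by rw [hn]; ring
    have h4 : 0 ≤ (l:ℤ)*(A-4) := mul_nonneg (by positivity) (by omega)
    nlinarith
  apply walk_mem_RSumset (fun a => 1 + (if a = 0 then -(l:ℤ) else 0) + (if a = l-1 then y else 0))
  · intro i hi
    by_cases h0 : i = 0
    · have hv : (1 + (if i = 0 then -(l:ℤ) else 0) + (if i = l-1 then y else 0)) = 1 - (l:ℤ) := by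
        rw [if_pos h0, if_neg (by omega)]
        ring
      rw [hv]
      refine Or.inr ⟨(((l:ℤ)-1 : ℤ) : ZMod n), ?_, ?_⟩
      · exact odd_mem_Splus ((l:ℤ)-1) (by omega) (by omega) (by rw [hA] at hAbig; omega)
      · push_cast
        ring
    · by_cases h1 : i = l-1
      · have hv : (1 + (if i = 0 then -(l:ℤ) else 0) + (if i = l-1 then y else 0)) = 1 + y := by
          rw [if_pos h1, if_neg h0]
          ring
        rw [hv]
        exact Or.inl (odd_mem_Splus (1+y) (by omega) (by omega) (by rw [hA] at hAbig; omega))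
      · have hv : (1 + (if i = 0 then -(l:ℤ) else 0) + (if i = l-1 then y else 0)) = 1 := by
          rw [if_neg h0, if_neg h1]
          ring
        rw [hv]
        exact Or.inl (odd_mem_Splus 1 (by omega) (by omega) (by rw [hA] at hAbig; omega))
  · rw [Finset.sum_add_distrib, Finset.sum_add_distrib, Finset.sum_const,
      Finset.sum_ite_eq' (Finset.range l) 0 (fun _ => -(l:ℤ)),
      Finset.sum_ite_eq' (Finset.range l) (l-1) (fun _ => y)]
    rw [if_pos (Finset.mem_range.mpr (by omega)), if_pos (Finset.mem_range.mpr (by omega))]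
    simp only [Finset.card_range, nsmul_eq_mul, mul_one]
    ring
  · intro i j hij hjl
    have hBsplit : (∑ a ∈ Finset.Icc i j,
          (1 + (if a = 0 then -(l:ℤ) else 0) + (if a = l-1 then y else 0)))
        = ((Finset.Icc i j).card : ℤ) + (if 0 ∈ Finset.Icc i j then -(l:ℤ) else 0)
          + (if l-1 ∈ Finset.Icc i j then y else 0) := by
      rw [Finset.sum_add_distrib, Finset.sum_add_distrib, Finset.sum_const,
        Finset.sum_ite_eq' (Finset.Icc i j) 0 (fun _ => -(l:ℤ)),
        Finset.sum_ite_eq' (Finset.Icc i j) (l-1) (fun _ => y)]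
      simp only [nsmul_eq_mul, mul_one]
    rw [hBsplit, Nat.card_Icc]
    simp only [Finset.mem_Icc]
    by_cases h0 : i ≤ 0 ∧ 0 ≤ j <;> by_cases h1 : i ≤ l-1 ∧ l-1 ≤ j <;>
      [rw [if_pos h0, if_pos h1]; rw [if_pos h0, if_neg h1];
       rw [if_neg h0, if_pos h1]; rw [if_neg h0, if_neg h1]] <;>
      refine not_dvd_of (by omega) (by rw [abs_lt]; constructor <;> omega)

end St15

theorem stmt15 (ℓ t k n : ℕ) (γ : ℤ)
    (hℓe : Even ℓ) (hℓ : 4 ≤ ℓ) (ht : 1 ≤ t)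
    (hγ1 : 1 ≤ (ℓ : ℤ) + 3 - 4 * ((t : ℤ) + 2) + γ * (2 * (ℓ : ℤ) + 2))
    (hγ2 : (ℓ : ℤ) + 3 - 4 * ((t : ℤ) + 2) + γ * (2 * (ℓ : ℤ) + 2) ≤ 2 * (ℓ : ℤ) + 2)
    (hk : 4 * (t : ℤ) + 2 * (ℓ : ℤ) + 2 * |γ| + 2 ≤ (k : ℤ))
    (hn : (n : ℤ) = (2 * (ℓ : ℤ) + 2) * (k : ℤ) +
      ((ℓ : ℤ) + 3 - 4 * ((t : ℤ) + 2) + γ * (2 * (ℓ : ℤ) + 2))) :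
    RSumset ℓ (Splus n t k γ ∪ Sminus n t k γ) =
      Set.univ \ ((Splus n t k γ ∪ Sminus n t k γ) ∪ {0}) := by
  classical
  have hll : (4:ℤ) ≤ (ℓ:ℤ) := by exact_mod_cast hℓ
  have ht0 : (1:ℤ) ≤ (t:ℤ) := by exact_mod_cast ht
  have hM : 4*(t:ℤ) + 2*(ℓ:ℤ) + 2 ≤ (k:ℤ)+γ := by
    rcases abs_cases γ with ⟨h1, h2⟩ | ⟨h1, h2⟩ <;> rw [h1] at hk <;> omega
  have hn' : (n:ℤ) = ((ℓ:ℤ)+1)*(2*((k:ℤ)+γ)+1) - (4*(t:ℤ)+6) := by rw [hn]; ring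
  have hA1 : 8*(t:ℤ) + 4*(ℓ:ℤ) + 5 ≤ 2*((k:ℤ)+γ)+1 := by omega
  obtain ⟨P, hP⟩ : ∃ P, P = (ℓ:ℤ)*(2*((k:ℤ)+γ)+1) := ⟨_, rfl⟩
  have hP0 : 0 ≤ P := by rw [hP]; exact mul_nonneg (by positivity) (by omega)
  have hnlA : (n:ℤ) = P + (2*((k:ℤ)+γ)+1) - 4*(t:ℤ) - 6 := by rw [hP, hn']; ring
  have hnpos : (0:ℤ) < (n:ℤ) := by omega
  haveI : NeZero n := ⟨by exact_mod_cast hnpos.ne'⟩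
  obtain ⟨l2, hl2⟩ : ∃ l2 : ℤ, (ℓ:ℤ) = 2*l2 := by
    obtain ⟨r, hr⟩ := hℓe; exact ⟨(r:ℤ), by rw [hr]; push_cast; ring⟩
  obtain ⟨w, hw⟩ : ∃ w, (n:ℤ) = 2*w + 1 :=
    ⟨2*l2*((k:ℤ)+γ) + l2 + ((k:ℤ)+γ) - 2*(t:ℤ) - 3, by rw [hn', hl2]; ring⟩
  ext x
  simp only [Set.mem_diff, Set.mem_univ, true_and, Set.mem_union, Set.mem_singleton_iff]
  constructor
  · rintro ⟨f, hf, hsum, hblock⟩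
    intro hbad
    have hx0 : x ≠ 0 := by
      intro h0
      have hIcc : Finset.Icc (⟨0, by omega⟩ : Fin ℓ) (⟨ℓ-1, by omega⟩ : Fin ℓ)
          = Finset.univ := by
        apply Finset.eq_univ_iff_forall.mpr
        intro a
        rw [Finset.mem_Icc]
        constructor
        · rw [Fin.le_def]
          simp
        · rw [Fin.le_def]
          simp
          omega
      exact hblock ⟨0, by omega⟩ ⟨ℓ-1, by omega⟩ (by rw [Fin.lt_def]; simp; omega)
        (by rw [hIcc, hsum, h0])
    choose ε u hε hu hfx using fun i => (St15.mem_S_iff (f i)).mp (hf i)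
    have e : ∀ i, f i = ((ε i * (2*((k:ℤ)+γ)+1 - 2*u i) : ℤ) : ZMod n) := fun i => by
      rw [hfx i]; congr 1; ring
    have hxX : x = ((∑ i, ε i * (2*((k:ℤ)+γ)+1 - 2*u i) : ℤ) : ZMod n) := by
      rw [← hsum, Finset.sum_congr rfl (fun i _ => e i)]
      push_cast
      rfl
    rcases hbad with (hS | hS) | rfl
    · exact St15.sum_notMem_Splus hℓe hℓ hM hn' ε u hε hu (hxX ▸ hS)
    · have hnegmem : -x ∈ Splus n t k γ := by
        obtain ⟨z, hz, hzx⟩ := hS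
        rw [← hzx]
        simpa using hz
      have hsneg : (∑ i, (-ε i) * (2*((k:ℤ)+γ)+1 - 2*u i))
          = -(∑ i, ε i * (2*((k:ℤ)+γ)+1 - 2*u i)) := by
        rw [← Finset.sum_neg_distrib]
        exact Finset.sum_congr rfl fun i _ => by ring
      have hxneg : -x = ((∑ i, (-ε i) * (2*((k:ℤ)+γ)+1 - 2*u i) : ℤ) : ZMod n) := by
        rw [hxX, hsneg]
        push_cast
        ring
      exact St15.sum_notMem_Splus hℓe hℓ hM hn' (fun i => -ε i) u
        (fun i => by rcases hε i with h | h <;> simp [h]) hu (hxneg ▸ hnegmem)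
    · exact hx0 rfl
  · intro hnot
    push_neg at hnot
    obtain ⟨⟨hxSp, hxSm⟩, hx0⟩ := hnot
    have hxS : x ∉ Splus n t k γ ∪ Sminus n t k γ := by
      rintro (h | h)
      exacts [hxSp h, hxSm h]
    have hxval : (((x.val : ℤ)) : ZMod n) = x := by
      push_cast
      exact ZMod.natCast_rightInverse x
    have hvlt : ((x.val : ℕ) : ℤ) < (n:ℤ) := by exact_mod_cast ZMod.val_lt x
    have hv0 : ((x.val : ℕ) : ℤ) ≠ 0 := by
      intro h
      exact hx0 ((ZMod.val_eq_zero x).mp (by exact_mod_cast h))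
    have hv00 : (0:ℤ) ≤ ((x.val : ℕ) : ℤ) := by positivity
    set xv : ℤ := ((x.val : ℕ) : ℤ) with hxvdef
    have key : ∀ y : ℤ, y % 2 = 0 → 2 ≤ y → y ≤ (ℓ:ℤ)*(2*((k:ℤ)+γ)+1) →
        ((y:ℤ):ZMod n) ∉ Splus n t k γ ∪ Sminus n t k γ →
        ((y:ℤ):ZMod n) ∈ RSumset ℓ (Splus n t k γ ∪ Sminus n t k γ) := by
      intro y h1 h2 h3 h4
      rcases le_or_gt y ((ℓ:ℤ)-2) with hc | hc
      · exact St15.small_main hℓe hℓ hM hn' y h2 hc h1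
      · exact St15.pos_main hℓe hℓ hM hn' y (by omega) h3 h1 h4
    by_cases hpar : xv % 2 = 0
    · -- y = xv
      by_cases hyb : xv ≤ P
      · have hres := key xv hpar (by omega) (by rw [← hP]; exact hyb) (by rw [hxval]; exact hxS)
        rw [hxval] at hres
        exact hres
      · exfalso
        apply hxSm
        push_neg at hyb
        refine ⟨(((n:ℤ) - xv : ℤ) : ZMod n),
          St15.odd_mem_Splus _ (by omega) (by omega) (by omega), ?_⟩
        rw [← hxval]
        push_cast
        simp [ZMod.natCast_self]
    · -- xv odd : use y = n - xv and negate
      have hyev : ((n:ℤ) - xv) % 2 = 0 := by omega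
      have hcast : (((n:ℤ) - xv : ℤ) : ZMod n) = -x := by
        rw [← hxval]
        push_cast
        simp [ZMod.natCast_self]
      by_cases hyb : (n:ℤ) - xv ≤ P
      · have hnegS : -x ∉ Splus n t k γ ∪ Sminus n t k γ := by
          intro h
          exact hxS (by simpa using St15.S_neg_mem h)
        have hres := key ((n:ℤ) - xv) hyev (by omega) (by rw [← hP]; exact hyb)
          (by rw [hcast]; exact hnegS)
        rw [hcast] at hres
        have := St15.RSumset_neg (fun z hz => St15.S_neg_mem hz) hres
        simpa using this
      · exfalso
        apply hxSp
        push_neg at hyb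
        have hxmem : ((xv : ℤ) : ZMod n) ∈ Splus n t k γ :=
          St15.odd_mem_Splus xv (by omega) (by omega) (by omega)
        rw [hxval] at hxmem
        exact hxmem
end
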